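/- arXiv:1204.4025 — 9 statements merged into one kernel-verified Lean document; each statement's English description precedes it below -/
import Mathlib

section
/- Let n ≥ 2 be an integer, a > 0 and c ≥ 0 with c ≠ 1/i for every integer i with 1 ≤ i ≤ n−1. Define β_j = (n−j)(1+jc) for 0 ≤ j ≤ n−1, and define coefficients recursively by α_{1,0} = n, and for 1 ≤ k ≤ n−1: α_{k+1,j} = α_{k,j} β_k/(β_k − β_j) for 0 ≤ j ≤ k−1 and α_{k+1,k} = −Σ_{u=0}^{k−1} α_{k,u} β_k/(β_k − β_u). Let X_0, …, X_{n−1} be independent random variables with X_i exponentially distributed with rate a(1+ic)(n−i), and set τ^k = X_0 + … + X_{k−1}. Then for every 1 ≤ k ≤ n, the law of τ^k has density f_{τ^k}(t) = Σ_{j=0}^{k−1} α_{k,j} a e^{−β_j a t} with respect to Lebesgue measure on (0,∞). -/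
/-!
Induction on `k`: `τ^{k+1} = τ^k + X_k` with `X_k` independent of `τ^k`, so the density of
`τ^{k+1}` is the convolution of that of `τ^k` with the exponential density of rate `r_k = β_k a`.
Convolving `e^{-r_j s}` with `r_k e^{-r_k s}` gives `r_k / (r_k - r_j) (e^{-r_j t} - e^{-r_k t})`,
which is exactly the recursion defining `α`; the condition `c ≠ 1/i` keeps the rates distinct.
-/
open MeasureTheory ProbabilityTheory Real Set
open scoped ENNReal

lemma expMeasure_eq_withDensity_Ioi (r : ℝ) :
    expMeasure r =
      (volume.restrict (Ioi 0)).withDensity fun t => ENNReal.ofReal (r * rexp (-(r * t))) := by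
  rw [← withDensity_indicator measurableSet_Ioi]
  refine withDensity_congr_ae ?_
  filter_upwards [volume.ae_ne (0 : ℝ)] with t ht
  rcases ht.lt_or_gt with ht | ht
  · rw [indicator_of_notMem (notMem_Ioi.2 ht.le)]
    exact exponentialPDF_of_neg ht
  · rw [indicator_of_mem (mem_Ioi.2 ht)]
    exact exponentialPDF_of_nonneg ht.le

lemma lconvolution_indicator_Ioi_ofReal {f g : ℝ → ℝ} (hf : Continuous f) (hg : Continuous g)
    (hf₀ : ∀ x, 0 < x → 0 ≤ f x) (hg₀ : ∀ x, 0 < x → 0 ≤ g x) (t : ℝ) :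
    ((Ioi 0).indicator (fun x => ENNReal.ofReal (f x)) ⋆ₗ
        (Ioi 0).indicator (fun x => ENNReal.ofReal (g x))) t =
      (Ioi 0).indicator (fun t => ENNReal.ofReal (∫ x in 0..t, f x * g (t - x))) t := by
  have hsupp : ∀ x, (Ioi 0).indicator (fun x => ENNReal.ofReal (f x)) x *
      (Ioi 0).indicator (fun x => ENNReal.ofReal (g x)) (-x + t) =
      (Ioo 0 t).indicator (fun x => ENNReal.ofReal (f x * g (t - x))) x := by
    intro x
    by_cases hx : 0 < x
    · by_cases hxt : x < t <;>
        simp [indicator, hx, hxt, neg_add_eq_sub, ENNReal.ofReal_mul (hf₀ x hx)]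
    · simp [indicator, hx]
  rw [lconvolution_def, lintegral_congr hsupp, lintegral_indicator measurableSet_Ioo]
  rcases le_or_gt t 0 with ht | ht
  · simp [ht.not_gt]
  have hint : IntegrableOn (fun x => f x * g (t - x)) (Ioo 0 t) :=
    (hf.mul (hg.comp (continuous_sub_left t))).integrableOn_Icc.mono_set Ioo_subset_Icc_self
  rw [indicator_of_mem (mem_Ioi.2 ht), intervalIntegral.integral_of_le ht.le,
    integral_Ioc_eq_integral_Ioo, ofReal_integral_eq_lintegral_ofReal hint]
  filter_upwards [ae_restrict_mem measurableSet_Ioo] with x hx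
  exact mul_nonneg (hf₀ x hx.1) (hg₀ _ (sub_pos.2 hx.2))

lemma withDensity_Ioi_conv_withDensity_Ioi {f g : ℝ → ℝ} (hf : Continuous f) (hg : Continuous g)
    (hf₀ : ∀ x, 0 < x → 0 ≤ f x) (hg₀ : ∀ x, 0 < x → 0 ≤ g x) :
    (volume.restrict (Ioi 0)).withDensity (fun x => ENNReal.ofReal (f x)) ∗
        (volume.restrict (Ioi 0)).withDensity (fun x => ENNReal.ofReal (g x)) =
      (volume.restrict (Ioi 0)).withDensity
        (fun t => ENNReal.ofReal (∫ x in 0..t, f x * g (t - x))) := by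
  simp only [← withDensity_indicator measurableSet_Ioi]
  rw [conv_withDensity_eq_lconvolution (hf.measurable.ennreal_ofReal.indicator measurableSet_Ioi)
    (hg.measurable.ennreal_ofReal.indicator measurableSet_Ioi)]
  congr 1
  exact funext (lconvolution_indicator_Ioi_ofReal hf hg hf₀ hg₀)

lemma integral_exp_mul_exp_sub {p q : ℝ} (h : p ≠ q) (t : ℝ) :
    ∫ s in 0..t, rexp (-(p * s)) * rexp (-(q * (t - s))) =
      (rexp (-(p * t)) - rexp (-(q * t))) / (q - p) := by
  have hqp : q - p ≠ 0 := sub_ne_zero.2 h.symm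
  have hderiv : ∀ s, HasDerivAt (fun s => rexp ((q - p) * s - q * t) / (q - p))
      (rexp (-(p * s)) * rexp (-(q * (t - s)))) s := by
    intro s
    refine ((((hasDerivAt_id s).const_mul (q - p)).sub_const (q * t)).exp.div_const
      (q - p)).congr_deriv ?_
    simp only [id, ← Real.exp_add]
    field_simp
    ring_nf
  rw [intervalIntegral.integral_eq_sub_of_hasDerivAt (fun s _ => hderiv s)
    (by apply Continuous.intervalIntegrable; fun_prop), ← sub_div]
  congr 2 <;> ring_nf

lemma integral_sum_exp_mul_exp_sub (A r : ℕ → ℝ) (ρ : ℝ) (k : ℕ) (hne : ∀ j < k, r j ≠ ρ)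
    (t : ℝ) :
    ∫ s in 0..t, (∑ j ∈ Finset.range k, A j * rexp (-(r j * s))) * (ρ * rexp (-(ρ * (t - s)))) =
      ∑ j ∈ Finset.range k, A j * ρ / (ρ - r j) * rexp (-(r j * t)) +
        (-∑ j ∈ Finset.range k, A j * ρ / (ρ - r j)) * rexp (-(ρ * t)) := by
  have hterm : ∀ j ∈ Finset.range k,
      ∫ s in 0..t, A j * rexp (-(r j * s)) * (ρ * rexp (-(ρ * (t - s)))) =
        A j * ρ / (ρ - r j) * (rexp (-(r j * t)) - rexp (-(ρ * t))) := by
    intro j hj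
    have h := integral_exp_mul_exp_sub (hne j (Finset.mem_range.1 hj)) t
    calc _ = A j * ρ * ∫ s in 0..t, rexp (-(r j * s)) * rexp (-(ρ * (t - s))) := by
            rw [← intervalIntegral.integral_const_mul]; congr 1; ext s; ring
      _ = _ := by rw [h]; ring
  simp_rw [Finset.sum_mul]
  rw [intervalIntegral.integral_finsetSum
    (fun j _ => by apply Continuous.intervalIntegrable; fun_prop), Finset.sum_congr rfl hterm,
    neg_mul, Finset.sum_mul, ← sub_eq_add_neg, ← Finset.sum_sub_distrib]
  simp only [mul_sub]

section Hypoexponential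

noncomputable def hypoexpDensity (C : ℕ → ℕ → ℝ) (r : ℕ → ℝ) (k : ℕ) (t : ℝ) : ℝ :=
  ∑ j ∈ Finset.range k, C k j * rexp (-(r j * t))

variable {C : ℕ → ℕ → ℝ} {r : ℕ → ℝ}

lemma hypoexpDensity_succ {k : ℕ}
    (hCk : (∀ j < k, C (k + 1) j = C k j * r k / (r k - r j)) ∧
      C (k + 1) k = -∑ u ∈ Finset.range k, C k u * r k / (r k - r u))
    (hne : ∀ j < k, r j ≠ r k) (t : ℝ) :
    hypoexpDensity C r (k + 1) t =
      ∫ s in 0..t, hypoexpDensity C r k s * (r k * rexp (-(r k * (t - s)))) := by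
  simp only [hypoexpDensity]
  rw [Finset.sum_range_succ, hCk.2, integral_sum_exp_mul_exp_sub _ _ _ _ hne]
  congr 1
  exact Finset.sum_congr rfl fun j hj => by rw [hCk.1 j (Finset.mem_range.1 hj)]

lemma continuous_hypoexpDensity (k : ℕ) : Continuous (hypoexpDensity C r k) := by
  unfold hypoexpDensity
  fun_prop

lemma hypoexpDensity_nonneg {n : ℕ} (hC₁ : C 1 0 = r 0)
    (hC : ∀ k, 1 ≤ k → k + 1 ≤ n → (∀ j < k, C (k + 1) j = C k j * r k / (r k - r j)) ∧
      C (k + 1) k = -∑ u ∈ Finset.range k, C k u * r k / (r k - r u))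
    (hr : ∀ i < n, 0 ≤ r i) (hr_ne : ∀ i j, i < j → j < n → r i ≠ r j)
    {k : ℕ} (hk : 1 ≤ k) (hkn : k ≤ n) {t : ℝ} (ht : 0 < t) :
    0 ≤ hypoexpDensity C r k t := by
  induction k, hk using Nat.le_induction generalizing t with
  | base =>
    rw [hypoexpDensity, Finset.sum_range_one, hC₁]
    exact mul_nonneg (hr 0 (by omega)) (exp_pos _).le
  | succ k hk ih =>
    rw [hypoexpDensity_succ (hC k hk hkn) fun j hj => hr_ne j k hj (by omega),
      intervalIntegral.integral_of_le ht.le, integral_Ioc_eq_integral_Ioo]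
    refine setIntegral_nonneg measurableSet_Ioo fun s hs => mul_nonneg (ih (by omega) hs.1) ?_
    exact mul_nonneg (hr k (by omega)) (exp_pos _).le

lemma Fin.sum_filter_val_lt_succ {M : Type*} [AddCommMonoid M] {n k : ℕ} (hk : k < n)
    (f : Fin n → M) :
    ∑ i ∈ Finset.univ.filter (fun i : Fin n => (i : ℕ) < k + 1), f i =
      ∑ i ∈ Finset.univ.filter (fun i : Fin n => (i : ℕ) < k), f i + f ⟨k, hk⟩ := by
  have hfilter : Finset.univ.filter (fun i : Fin n => (i : ℕ) < k + 1) =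
      insert ⟨k, hk⟩ (Finset.univ.filter (fun i : Fin n => (i : ℕ) < k)) := by
    ext i
    simp only [Finset.mem_filter, Finset.mem_univ, true_and, Finset.mem_insert, Fin.ext_iff]
    omega
  rw [hfilter, Finset.sum_insert (by simp), add_comm]

theorem map_sum_filter_lt_eq_withDensity_hypoexpDensity {Ω : Type*} [MeasurableSpace Ω]
    {μ : Measure Ω} [IsFiniteMeasure μ] {n : ℕ} (X : Fin n → Ω → ℝ)
    (hX : ∀ i, Measurable (X i)) (hindep : iIndepFun X μ)
    (hXdist : ∀ i : Fin n, μ.map (X i) = expMeasure (r i)) (hC₁ : C 1 0 = r 0)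
    (hC : ∀ k, 1 ≤ k → k + 1 ≤ n → (∀ j < k, C (k + 1) j = C k j * r k / (r k - r j)) ∧
      C (k + 1) k = -∑ u ∈ Finset.range k, C k u * r k / (r k - r u))
    (hr : ∀ i < n, 0 ≤ r i) (hr_ne : ∀ i j, i < j → j < n → r i ≠ r j)
    {k : ℕ} (hk : 1 ≤ k) (hkn : k ≤ n) :
    μ.map (fun ω => ∑ i ∈ Finset.univ.filter (fun i : Fin n => (i : ℕ) < k), X i ω) =
      (volume.restrict (Ioi 0)).withDensity fun t => ENNReal.ofReal (hypoexpDensity C r k t) := by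
  induction k, hk using Nat.le_induction with
  | base =>
    have h0 : Finset.univ.filter (fun i : Fin n => (i : ℕ) < 1) = {⟨0, by omega⟩} := by
      ext i
      simp [Fin.ext_iff]
    simp only [h0, Finset.sum_singleton, hXdist, expMeasure_eq_withDensity_Ioi, hypoexpDensity,
      Finset.sum_range_one, hC₁]
  | succ k hk ih =>
    have hkn' : k < n := by omega
    have hsplit : (fun ω => ∑ i ∈ Finset.univ.filter (fun i : Fin n => (i : ℕ) < k + 1), X i ω) =
        (∑ i ∈ Finset.univ.filter (fun i : Fin n => (i : ℕ) < k), X i) + X ⟨k, hkn'⟩ := by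
      ext ω
      simp only [Fin.sum_filter_val_lt_succ hkn', Pi.add_apply, Finset.sum_apply]
    have hindep_k := hindep.indepFun_finsetSum_of_notMem hX
      (i := ⟨k, hkn'⟩) (s := Finset.univ.filter (fun i : Fin n => (i : ℕ) < k)) (by simp)
    rw [hsplit, hindep_k.map_add_eq_map_conv_map (by fun_prop) (hX _), Finset.sum_fn,
      ih (by omega), hXdist, expMeasure_eq_withDensity_Ioi,
      withDensity_Ioi_conv_withDensity_Ioi (continuous_hypoexpDensity k) (by fun_prop)
        (fun t ht => hypoexpDensity_nonneg hC₁ hC hr hr_ne hk (by omega) ht)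
        (fun t _ => mul_nonneg (hr k hkn') (exp_pos _).le)]
    simp only [hypoexpDensity_succ (hC k hk hkn) fun j hj => hr_ne j k hj hkn']

end Hypoexponential

/-- `β_j - β_i = (j - i)(c(n - i - j) - 1)`, which vanishes only if `c = 1/(n - i - j)`. -/
lemma contagionRate_ne {n i j : ℕ} {c : ℝ} (hc : 0 ≤ c)
    (hcne : ∀ m : ℕ, 1 ≤ m → m ≤ n - 1 → c ≠ 1 / (m : ℝ)) (hij : i < j) (hj : j < n) :
    ((n : ℝ) - i) * (1 + i * c) ≠ ((n : ℝ) - j) * (1 + j * c) := by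
  intro h
  have hji : (j : ℝ) - i ≠ 0 := sub_ne_zero.2 (by exact_mod_cast hij.ne')
  have hcm : c * ((n : ℝ) - i - j) = 1 :=
    mul_left_cancel₀ hji (by linear_combination -h)
  have hpos : 0 < (n : ℝ) - i - j := pos_of_mul_pos_right (hcm ▸ one_pos) hc
  have hlt : i + j < n := by exact_mod_cast (by linarith : (i : ℝ) + j < n)
  have hm : ((n - i - j : ℕ) : ℝ) = n - i - j := by
    rw [Nat.cast_sub (by omega), Nat.cast_sub (by omega)]
  refine hcne (n - i - j) (by omega) (by omega) ?_
  rw [eq_div_iff (hm ▸ hpos.ne'), hm, hcm]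

lemma mul_mul_div_sub_mul_mul {x y z a : ℝ} (ha : a ≠ 0) :
    x * a * (y * a) / (y * a - z * a) = x * y / (y - z) * a := by
  rw [← sub_mul, show x * a * (y * a) = x * y * a * a by ring, mul_div_mul_right _ _ ha,
    mul_div_right_comm]

theorem kth_default_time_density_closed_form_general
    {Ω : Type*} [MeasureSpace Ω] [IsProbabilityMeasure (ℙ : Measure Ω)]
    (n : ℕ) (a c : ℝ) (ha : 0 < a) (hc : 0 ≤ c)
    (hcne : ∀ i : ℕ, 1 ≤ i → i ≤ n - 1 → c ≠ 1 / (i : ℝ))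
    (β : ℕ → ℝ) (hβ : ∀ j ≤ n - 1, β j = ((n : ℝ) - (j : ℝ)) * (1 + (j : ℝ) * c))
    (α : ℕ → ℕ → ℝ) (hα1 : α 1 0 = n)
    (hαrec : ∀ k, 1 ≤ k → k ≤ n - 1 →
      (∀ j ≤ k - 1, α (k + 1) j = α k j * β k / (β k - β j)) ∧
      α (k + 1) k = -∑ u ∈ Finset.range k, α k u * β k / (β k - β u))
    (X : Fin n → Ω → ℝ) (hXmeas : ∀ i, Measurable (X i))
    (hindep : iIndepFun X ℙ)
    (hXdist : ∀ i : Fin n,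
      Measure.map (X i) ℙ = expMeasure (a * (1 + (i : ℝ) * c) * ((n : ℝ) - (i : ℝ)))) :
    ∀ k, 1 ≤ k → k ≤ n →
      Measure.map
          (fun ω => ∑ i ∈ Finset.univ.filter (fun i : Fin n => (i : ℕ) < k), X i ω) ℙ =
        (volume.restrict (Ioi (0 : ℝ))).withDensity
          (fun t => ENNReal.ofReal
            (∑ j ∈ Finset.range k, α k j * a * Real.exp (-(β j * a * t)))) := by
  intro k hk hkn
  refine map_sum_filter_lt_eq_withDensity_hypoexpDensity (C := fun k j => α k j * a)
    (r := fun j => β j * a) X hXmeas hindep (fun i => ?_) ?_ (fun m hm hmn => ?_)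
    (fun i hi => ?_) (fun i j hij hj => ?_) hk hkn
  · rw [hXdist i, hβ i (by omega)]
    congr 1
    ring
  · simp [hα1, hβ 0 (Nat.zero_le _)]
  · obtain ⟨hα_lt, hα_diag⟩ := hαrec m hm (by omega)
    simp only [mul_mul_div_sub_mul_mul ha.ne']
    refine ⟨fun j hj => by rw [hα_lt j (by omega)], by rw [hα_diag, neg_mul, Finset.sum_mul]⟩
  · have hin : (i : ℝ) < n := by exact_mod_cast hi
    rw [hβ i (by omega)]
    positivity
  · rw [hβ i (by omega), hβ j (by omega)]
    exact (mul_left_injective₀ ha.ne').ne (contagionRate_ne hc hcne hij hj)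

/-- Closed-form density of the `k`-th default time in the homogeneous contagion model:
with `β j = (n-j)(1+jc)` and `α` defined by the stated recursion, the law of
`τ^k = X 0 + ⋯ + X (k-1)` (a sum of independent exponentials with rates `a(1+ic)(n-i)`)
has density `t ↦ Σ_{j<k} α k j · a · e^{-β j a t}` w.r.t. Lebesgue measure on `(0,∞)`. -/
theorem kth_default_time_density_closed_form
    {Ω : Type*} [MeasureSpace Ω] [IsProbabilityMeasure (ℙ : Measure Ω)]
    (n : ℕ) (hn : 2 ≤ n) (a c : ℝ) (ha : 0 < a) (hc : 0 ≤ c)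
    (hcne : ∀ i : ℕ, 1 ≤ i → i ≤ n - 1 → c ≠ 1 / (i : ℝ))
    (β : ℕ → ℝ) (hβ : ∀ j ≤ n - 1, β j = ((n : ℝ) - (j : ℝ)) * (1 + (j : ℝ) * c))
    (α : ℕ → ℕ → ℝ) (hα1 : α 1 0 = n)
    (hαrec : ∀ k, 1 ≤ k → k ≤ n - 1 →
      (∀ j ≤ k - 1, α (k + 1) j = α k j * β k / (β k - β j)) ∧
      α (k + 1) k = -∑ u ∈ Finset.range k, α k u * β k / (β k - β u))
    (X : Fin n → Ω → ℝ) (hXmeas : ∀ i, Measurable (X i))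
    (hindep : iIndepFun X ℙ)
    (hXdist : ∀ i : Fin n,
      Measure.map (X i) ℙ = expMeasure (a * (1 + (i : ℝ) * c) * ((n : ℝ) - (i : ℝ)))) :
    ∀ k, 1 ≤ k → k ≤ n →
      Measure.map
          (fun ω => ∑ i ∈ Finset.univ.filter (fun i : Fin n => (i : ℕ) < k), X i ω) ℙ =
        (volume.restrict (Ioi (0 : ℝ))).withDensity
          (fun t => ENNReal.ofReal
            (∑ j ∈ Finset.range k, α k j * a * Real.exp (-(β j * a * t)))) :=
  kth_default_time_density_closed_form_general n a c ha hc hcne β hβ α hα1 hαrec X hXmeas hindep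
    hXdist
end

section
/- Let n ≥ 2 be an integer and c ≥ 0 with c ≠ 1/i for every integer 1 ≤ i ≤ n−1. Define β_j = (n−j)(1+jc) and the coefficients α_{k,j} recursively by α_{1,0} = n, α_{k+1,j} = α_{k,j} β_k/(β_k − β_j) for 0 ≤ j ≤ k−1, and α_{k+1,k} = −Σ_{u=0}^{k−1} α_{k,u} β_k/(β_k − β_u). Then for every 1 ≤ k ≤ n and 0 ≤ j ≤ k−1, α_{k,j} = (−1)^{k−1−j} n! (∏_{m=1}^{k−1}(1+mc)) / [ (n−k)! j! (k−1−j)! ∏_{m=0, m≠j}^{k−1} (1+(m+j−n)c) ]. -/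
/-!
The closed formula is `(∏ m < k, β m) * ∏ m < k, m ≠ j, (β m - β j)⁻¹`, the coefficient of
`exp (-β j t)` in the density of a sum of independent exponentials with rates `β 0, …, β (k-1)`:
the Lagrange nodal weight of `j` for the nodes `-β m`, scaled by `∏ β m`. Adding the node `-β k`
multiplies the old weights by `β k / (β k - β j)`, which is the recursion for `j < k`; the new
weight is forced by the vanishing of the sum of all nodal weights, which is the coefficient of
`X ^ k` in the degree-`≤ k` interpolant of the constant `1`. The nodes are distinct because
`β m - β j = (j - m) (1 + (m + j - n) c)`, and this factorisation also turns the nodal weight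
into the displayed quotient of factorials and products.
-/

open Finset

namespace Lagrange

variable {F ι : Type*} [Field F] [DecidableEq ι] {s : Finset ι} {v : ι → F}

theorem sum_nodalWeight_eq_zero (hvs : Set.InjOn v s) (hs : 2 ≤ #s) :
    ∑ i ∈ s, nodalWeight s v i = 0 := by
  have hdeg : (1 : Polynomial F).degree < #s := by
    rw [Polynomial.degree_one]; exact_mod_cast (by omega : 0 < #s)
  have h := coeff_eq_sum hvs hdeg
  rw [Polynomial.coeff_one, if_neg (by omega)] at h
  simpa only [nodalWeight, prod_inv_distrib, Polynomial.eval_one, one_div] using h.symm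

theorem nodalWeight_insert {i j : ι} (hj : j ∉ s) (hij : i ≠ j) :
    nodalWeight (insert j s) v i = nodalWeight s v i * (v i - v j)⁻¹ := by
  rw [nodalWeight, erase_insert_of_ne hij.symm, prod_insert fun h => hj (mem_of_mem_erase h),
    nodalWeight, mul_comm]

end Lagrange

open Lagrange

theorem hypoexp_coeff_eq_prod_mul_nodalWeight {F : Type*} [Field F] (N : ℕ) (β : ℕ → F)
    (hβ : Set.InjOn β (range N)) (α : ℕ → ℕ → F) (hα1 : α 1 0 = β 0)
    (hrec : ∀ k, 1 ≤ k → k < N →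
      (∀ j < k, α (k + 1) j = α k j * β k / (β k - β j)) ∧
      α (k + 1) k = -∑ u ∈ range k, α k u * β k / (β k - β u)) :
    ∀ k, 1 ≤ k → k ≤ N → ∀ j < k,
      α k j = (∏ m ∈ range k, β m) * nodalWeight (range k) (-β) j := by
  intro k hk
  induction k, hk using Nat.le_induction with
  | base =>
    intro _ j hj
    obtain rfl : j = 0 := by omega
    simp [hα1, nodalWeight]
  | succ k hk ih =>
    intro hkN j hj
    have hlow : ∀ j < k, α k j * β k / (β k - β j) =
        (∏ m ∈ range (k + 1), β m) * nodalWeight (range (k + 1)) (-β) j := by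
      intro j hj
      rw [ih (by omega) j hj, prod_range_succ, range_add_one,
        nodalWeight_insert notMem_range_self hj.ne, Pi.neg_apply, Pi.neg_apply]
      ring
    obtain hj | rfl : j < k ∨ k = j := by omega
    · exact ((hrec k hk hkN).1 j hj).trans (hlow j hj)
    have hsub : range (k + 1) ⊆ range N := range_subset_range.2 hkN
    have hsum := sum_nodalWeight_eq_zero (s := range (k + 1)) (v := -β)
      (fun a ha b hb h => hβ (hsub ha) (hsub hb) (neg_injective h)) (by rw [card_range]; omega)
    rw [sum_range_succ] at hsum
    rw [(hrec k hk hkN).2, sum_congr rfl fun u hu => hlow u (mem_range.1 hu), ← mul_sum]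
    linear_combination -(∏ m ∈ range (k + 1), β m) * hsum

theorem prod_range_erase_sub {j k : ℕ} (hjk : j < k) :
    ∏ m ∈ (range k).erase j, ((j : ℝ) - m) =
      (-1) ^ (k - 1 - j) * (j.factorial : ℝ) * ((k - 1 - j).factorial : ℝ) := by
  induction k, hjk using Nat.le_induction with
  | base =>
    rw [range_add_one, erase_insert notMem_range_self, ← Nat.descFactorial_self,
      Nat.descFactorial_eq_prod_range, Nat.cast_prod]
    simp only [Nat.succ_eq_add_one, add_tsub_cancel_right, tsub_self, pow_zero, one_mul,
      Nat.factorial_zero, Nat.cast_one, mul_one]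
    exact prod_congr rfl fun m hm => by rw [Nat.cast_sub (mem_range.1 hm).le]
  | succ k hjk ih =>
    rw [range_add_one, erase_insert_of_ne (by omega : k ≠ j),
      prod_insert fun h => notMem_range_self (mem_of_mem_erase h), ih,
      show k + 1 - 1 - j = (k - 1 - j) + 1 by omega, Nat.factorial_succ, pow_succ,
      Nat.cast_mul, Nat.cast_add_one, Nat.cast_sub (by omega : j ≤ k - 1),
      Nat.cast_pred (by omega)]
    ring

section DefaultRates

variable {n : ℕ} {c : ℝ}

theorem one_add_mul_ne_zero_of_ne_inv (hc : 0 ≤ c)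
    (hcne : ∀ i : ℕ, 1 ≤ i → i ≤ n - 1 → c ≠ 1 / (i : ℝ)) {m j : ℕ} (h : 1 ≤ m + j) :
    1 + ((m : ℝ) + j - n) * c ≠ 0 := by
  intro h0
  rcases le_or_gt n (m + j) with hle | hlt
  · have : (n : ℝ) ≤ m + j := by exact_mod_cast hle
    nlinarith
  · apply hcne (n - (m + j)) (by omega) (by omega)
    have : (0 : ℝ) < (n - (m + j) : ℕ) := by exact_mod_cast (by omega : 0 < n - (m + j))
    rw [eq_div_iff this.ne', Nat.cast_sub hlt.le]
    push_cast
    linarith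

variable {β : ℕ → ℝ} (hβ : ∀ m < n, β m = ((n : ℝ) - m) * (1 + m * c))
include hβ

theorem rate_sub_rate {m j : ℕ} (hm : m < n) (hj : j < n) :
    β m - β j = ((j : ℝ) - m) * (1 + ((m : ℝ) + j - n) * c) := by
  rw [hβ m hm, hβ j hj]
  ring

theorem injOn_rates (hc : 0 ≤ c) (hcne : ∀ i : ℕ, 1 ≤ i → i ≤ n - 1 → c ≠ 1 / (i : ℝ)) :
    Set.InjOn β (range n) := by
  intro m hm j hj h
  by_contra hmj
  simp only [coe_range, Set.mem_Iio] at hm hj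
  have hdiff := rate_sub_rate hβ hm hj
  rw [h, sub_self, eq_comm, mul_eq_zero, sub_eq_zero, Nat.cast_inj] at hdiff
  exact hdiff.elim (fun hjm => hmj hjm.symm) (one_add_mul_ne_zero_of_ne_inv hc hcne (by omega))

theorem prod_range_rates {k : ℕ} (hk : k ≤ n) :
    ∏ m ∈ range k, β m =
      (n.factorial : ℝ) / ((n - k).factorial : ℝ) * ∏ m ∈ Icc 1 (k - 1), (1 + (m : ℝ) * c) := by
  rw [prod_congr rfl fun m hm => hβ m (by have := mem_range.1 hm; omega), prod_mul_distrib]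
  congr 1
  · rw [eq_div_iff (by positivity), ← Nat.factorial_mul_descFactorial hk,
      Nat.descFactorial_eq_prod_range, Nat.cast_mul, Nat.cast_prod, mul_comm]
    exact congrArg _ (prod_congr rfl fun m hm => by
      rw [Nat.cast_sub (by have := mem_range.1 hm; omega)])
  · cases k with
    | zero => simp
    | succ k =>
      rw [prod_range_succ', Nat.add_sub_cancel, ← Ico_add_one_right_eq_Icc,
        prod_Ico_eq_prod_range]
      simp [add_comm]

theorem nodalWeight_neg_rates {k j : ℕ} (hk : k ≤ n) (hj : j < k) :
    nodalWeight (range k) (-β) j =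
      (-1) ^ (k - 1 - j) * ((j.factorial : ℝ) * ((k - 1 - j).factorial : ℝ) *
        ∏ m ∈ (range k).erase j, (1 + ((m : ℝ) + j - n) * c))⁻¹ := by
  have hdiff : ∀ m ∈ (range k).erase j,
      (-β) j - (-β) m = ((j : ℝ) - m) * (1 + ((m : ℝ) + j - n) * c) := fun m hm => by
    rw [Pi.neg_apply, Pi.neg_apply, neg_sub_neg,
      rate_sub_rate hβ (by have := mem_range.1 (mem_of_mem_erase hm); omega) (by omega)]
  rw [nodalWeight, prod_inv_distrib, prod_congr rfl hdiff, prod_mul_distrib,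
    prod_range_erase_sub hj]
  simp only [mul_inv, ← inv_pow, inv_neg_one]
  ring

end DefaultRates

theorem alpha_closed_formula_general
    (n : ℕ) (c : ℝ) (hc : 0 ≤ c)
    (hcne : ∀ i : ℕ, 1 ≤ i → i ≤ n - 1 → c ≠ 1 / (i : ℝ))
    (β : ℕ → ℝ) (hβ : ∀ j ≤ n - 1, β j = ((n : ℝ) - (j : ℝ)) * (1 + (j : ℝ) * c))
    (α : ℕ → ℕ → ℝ) (hα1 : α 1 0 = n)
    (hαrec : ∀ k, 1 ≤ k → k ≤ n - 1 →
      (∀ j ≤ k - 1, α (k + 1) j = α k j * β k / (β k - β j)) ∧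
      α (k + 1) k = -∑ u ∈ Finset.range k, α k u * β k / (β k - β u)) :
    ∀ k, 1 ≤ k → k ≤ n → ∀ j ≤ k - 1,
      α k j =
        (-1 : ℝ) ^ (k - 1 - j) * (n.factorial : ℝ) *
            (∏ m ∈ Finset.Icc 1 (k - 1), (1 + (m : ℝ) * c)) /
          (((n - k).factorial : ℝ) * (j.factorial : ℝ) * ((k - 1 - j).factorial : ℝ) *
            ∏ m ∈ (Finset.range k).erase j, (1 + ((m : ℝ) + (j : ℝ) - (n : ℝ)) * c)) := by
  intro k hk hkn j hj
  have hβ' : ∀ m < n, β m = ((n : ℝ) - m) * (1 + m * c) := fun m hm => hβ m (by omega)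
  have hα1' : α 1 0 = β 0 := by rw [hα1, hβ' 0 (by omega)]; simp
  have hrec : ∀ k, 1 ≤ k → k < n →
      (∀ j < k, α (k + 1) j = α k j * β k / (β k - β j)) ∧
      α (k + 1) k = -∑ u ∈ range k, α k u * β k / (β k - β u) := fun k hk hkn =>
    ⟨fun j hj => (hαrec k hk (by omega)).1 j (by omega), (hαrec k hk (by omega)).2⟩
  rw [hypoexp_coeff_eq_prod_mul_nodalWeight n β (injOn_rates hβ' hc hcne) α hα1' hrec k hk hkn j
      (by omega), prod_range_rates hβ' hkn, nodalWeight_neg_rates hβ' hkn (by omega)]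
  ring

/-- Closed formula (Zheng–Jiang) for the coefficients `α k j` defined by the recursion
`α 1 0 = n`, `α (k+1) j = α k j β k/(β k - β j)` for `j ≤ k-1`,
`α (k+1) k = -Σ_{u<k} α k u β k/(β k - β u)`, where `β j = (n-j)(1+jc)`. -/
theorem alpha_closed_formula
    (n : ℕ) (hn : 2 ≤ n) (c : ℝ) (hc : 0 ≤ c)
    (hcne : ∀ i : ℕ, 1 ≤ i → i ≤ n - 1 → c ≠ 1 / (i : ℝ))
    (β : ℕ → ℝ) (hβ : ∀ j ≤ n - 1, β j = ((n : ℝ) - (j : ℝ)) * (1 + (j : ℝ) * c))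
    (α : ℕ → ℕ → ℝ) (hα1 : α 1 0 = n)
    (hαrec : ∀ k, 1 ≤ k → k ≤ n - 1 →
      (∀ j ≤ k - 1, α (k + 1) j = α k j * β k / (β k - β j)) ∧
      α (k + 1) k = -∑ u ∈ Finset.range k, α k u * β k / (β k - β u)) :
    ∀ k, 1 ≤ k → k ≤ n → ∀ j ≤ k - 1,
      α k j =
        (-1 : ℝ) ^ (k - 1 - j) * (n.factorial : ℝ) *
            (∏ m ∈ Finset.Icc 1 (k - 1), (1 + (m : ℝ) * c)) /
          (((n - k).factorial : ℝ) * (j.factorial : ℝ) * ((k - 1 - j).factorial : ℝ) *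
            ∏ m ∈ (Finset.range k).erase j, (1 + ((m : ℝ) + (j : ℝ) - (n : ℝ)) * c)) :=
  alpha_closed_formula_general n c hc hcne β hβ α hα1 hαrec
end

section
/- Fix reals a > 0 and c > 0. For each integer k ≥ 1 let n_k ≥ k be an integer, and on a common probability space let T_k be a random variable whose law equals the law of the sum of k independent exponential random variables with rates a(1+ic)(n_k−i), i = 0, 1, …, k−1. Then T_k → 0 almost surely as k → ∞. In particular, taking n_k = k, the last-to-default time τ^n(n) in a portfolio of n names tends to 0 almost surely as n → ∞. -/
/-!
The rates satisfy `a (1 + i c) (n_k - i) ≥ b (i + 1) (k - i)` with `b = a min(1, c)`, and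
`∑_{i<k} 1 / ((i + 1)(k - i)) = 2 H_k / (k + 1) ≤ 4 / √k`. Splitting `ε` into the thresholds
`tᵢ = s / rᵢ` with `s = ε b √k / 4` (so that `∑ tᵢ ≤ ε`), a union bound over the exponential
summands gives `P(|T_k| > ε) ≤ k exp(-s)`, which is summable in `k`; Borel–Cantelli concludes.
-/

open MeasureTheory ProbabilityTheory Filter Real Set Finset
open scoped ENNReal

theorem sum_range_inv_succ_le_two_mul_sqrt (k : ℕ) :
    ∑ i ∈ range k, 1 / ((i : ℝ) + 1) ≤ 2 * √k := by
  rcases Nat.eq_zero_or_pos k with rfl | hk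
  · simp
  have hharm : ∑ i ∈ range k, 1 / ((i : ℝ) + 1) = harmonic k := by
    simp [harmonic]
  have hlog : Real.log k ≤ 2 * (√k - 1) := by
    have hs : 0 < √(k : ℝ) := Real.sqrt_pos.2 (by exact_mod_cast hk)
    calc Real.log k = 2 * Real.log √k := by
          rw [Real.log_sqrt (Nat.cast_nonneg k)]; ring
      _ ≤ 2 * (√k - 1) := by gcongr; exact Real.log_le_sub_one_of_pos hs
  rw [hharm]
  linarith [harmonic_le_one_add_log k]

theorem sum_range_inv_succ_mul_sub_le (k : ℕ) :
    ∑ i ∈ range k, 1 / (((i : ℝ) + 1) * (k - i)) ≤ 4 / √k := by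
  have partial_fractions : ∀ i ∈ range k, 1 / (((i : ℝ) + 1) * (k - i)) =
      (1 / ((k : ℝ) + 1)) * (1 / ((i : ℝ) + 1) + 1 / ((k - 1 - i : ℕ) + 1)) := by
    intro i hi
    have hik : i < k := mem_range.1 hi
    have hki : (0 : ℝ) < k - i := sub_pos.2 (by exact_mod_cast hik)
    have hrefl : ((k - 1 - i : ℕ) : ℝ) + 1 = k - i := by
      rw [Nat.cast_sub (by omega), Nat.cast_sub (by omega)]
      ring
    rw [hrefl]
    field_simp
    ring
  have reflect := sum_range_reflect (fun i => 1 / ((i : ℝ) + 1)) k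
  rw [sum_congr rfl partial_fractions, ← mul_sum, sum_add_distrib, reflect]
  rcases Nat.eq_zero_or_pos k with rfl | hk0
  · simp
  have hs : 0 < √(k : ℝ) := Real.sqrt_pos.2 (by exact_mod_cast hk0)
  calc 1 / ((k : ℝ) + 1) * (∑ i ∈ range k, 1 / ((i : ℝ) + 1) + ∑ i ∈ range k, 1 / ((i : ℝ) + 1))
      ≤ 1 / ((k : ℝ) + 1) * (2 * √k + 2 * √k) := by
        gcongr <;> exact sum_range_inv_succ_le_two_mul_sqrt k
    _ ≤ 4 / √k := by
        rw [div_mul_eq_mul_div, one_mul, div_le_div_iff₀ (by positivity) hs]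
        nlinarith [Real.mul_self_sqrt (Nat.cast_nonneg (α := ℝ) k)]

theorem expMeasure_Ioc_zero_compl {r t : ℝ} (hr : 0 < r) (ht : 0 ≤ t) :
    expMeasure r (Ioc 0 t)ᶜ = ENNReal.ofReal (exp (-(r * t))) := by
  have := isProbabilityMeasure_expMeasure hr
  rw [prob_compl_eq_one_sub measurableSet_Ioc, ← measure_cdf (expMeasure r),
    StieltjesFunction.measure_Ioc, cdf_expMeasure_eq hr, cdf_expMeasure_eq hr, if_pos ht,
    if_pos le_rfl, mul_zero, neg_zero, exp_zero, sub_self, sub_zero,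
    ENNReal.ofReal_sub _ (exp_pos _).le, ENNReal.ofReal_one,
    ENNReal.sub_sub_cancel ENNReal.one_ne_top]
  exact ENNReal.ofReal_le_one.2 (exp_le_one_iff.2 (by nlinarith))

theorem measure_abs_sum_gt_le_sum {ι : Type*} [Fintype ι] (μ : Measure (ι → ℝ))
    {t : ι → ℝ} {ε : ℝ} (ht : ∑ i, t i ≤ ε) :
    μ {x | ε < |∑ i, x i|} ≤ ∑ i, μ {x | x i ∉ Ioc 0 (t i)} := by
  calc μ {x | ε < |∑ i, x i|} ≤ μ (⋃ i, {x | x i ∉ Ioc 0 (t i)}) := by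
        refine measure_mono fun x hx => ?_
        by_contra hx'
        simp only [mem_iUnion, mem_ofPred_eq, not_exists, not_not, Set.mem_Ioc] at hx'
        have h0 : 0 ≤ ∑ i, x i := sum_nonneg fun i _ => (hx' i).1.le
        have hε : ∑ i, x i ≤ ε := (sum_le_sum fun i _ => (hx' i).2).trans ht
        exact (not_lt.2 (abs_le.2 ⟨by linarith, hε⟩)) hx
    _ ≤ ∑ i, μ {x | x i ∉ Ioc 0 (t i)} := measure_iUnion_fintype_le μ _

theorem pi_expMeasure_abs_sum_gt_le {ι : Type*} [Fintype ι] {r t : ι → ℝ} {ε : ℝ}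
    (hr : ∀ i, 0 < r i) (ht0 : ∀ i, 0 ≤ t i) (ht : ∑ i, t i ≤ ε) :
    Measure.pi (fun i => expMeasure (r i)) {x | ε < |∑ i, x i|} ≤
      ∑ i, ENNReal.ofReal (exp (-(r i * t i))) := by
  have := fun i => isProbabilityMeasure_expMeasure (hr i)
  refine (measure_abs_sum_gt_le_sum _ ht).trans_eq (sum_congr rfl fun i _ => ?_)
  rw [← expMeasure_Ioc_zero_compl (hr i) (ht0 i)]
  exact (measurePreserving_eval _ i).measure_preimage measurableSet_Ioc.compl.nullMeasurableSet

def contagionRate (a c : ℝ) (n i : ℕ) : ℝ := a * (1 + i * c) * (n - i)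

theorem mul_min_one_le_contagionRate {a c : ℝ} (ha : 0 ≤ a) (hc : 0 ≤ c) {n k i : ℕ}
    (hik : i ≤ k) (hkn : k ≤ n) :
    a * min 1 c * (((i : ℝ) + 1) * (k - i)) ≤ contagionRate a c n i := by
  have hi : min 1 c * ((i : ℝ) + 1) ≤ 1 + i * c := by
    nlinarith [min_le_left 1 c, min_le_right 1 c, Nat.cast_nonneg (α := ℝ) i]
  have hki : (0 : ℝ) ≤ k - i := sub_nonneg.2 (by exact_mod_cast hik)
  calc a * min 1 c * (((i : ℝ) + 1) * (k - i)) = a * (min 1 c * ((i : ℝ) + 1)) * (k - i) := by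
        ring
    _ ≤ a * (1 + i * c) * (k - i) := by gcongr
    _ ≤ contagionRate a c n i := by unfold contagionRate; gcongr

theorem pi_contagionRate_abs_sum_gt_le {a c ε : ℝ} (ha : 0 < a) (hc : 0 < c) (hε : 0 ≤ ε)
    {n k : ℕ} (hkn : k ≤ n) :
    Measure.pi (fun i : Fin k => expMeasure (contagionRate a c n i)) {x | ε < |∑ i, x i|} ≤
      ENNReal.ofReal (k * exp (-(ε * (a * min 1 c) / 4 * √k))) := by
  set b := a * min 1 c
  set s := ε * b / 4 * √k
  have hb : 0 < b := mul_pos ha (lt_min one_pos hc)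
  have hweight (i : Fin k) : 0 < b * (((i : ℝ) + 1) * (k - i)) :=
    mul_pos hb (mul_pos (by positivity) (sub_pos.2 (by exact_mod_cast i.is_lt)))
  have hr_lower (i : Fin k) : b * (((i : ℝ) + 1) * (k - i)) ≤ contagionRate a c n i :=
    mul_min_one_le_contagionRate ha.le hc.le i.is_lt.le hkn
  have hr (i : Fin k) : 0 < contagionRate a c n i := (hweight i).trans_le (hr_lower i)
  -- Thresholds `s / rᵢ` make every exponential tail equal to `exp (-s)`.
  have hsum : ∑ i : Fin k, s / contagionRate a c n i ≤ ε := by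
    calc ∑ i : Fin k, s / contagionRate a c n i
        ≤ ∑ i : Fin k, s / b * (1 / (((i : ℝ) + 1) * (k - i))) := by
          refine sum_le_sum fun i _ => ?_
          rw [div_mul_div_comm, mul_one]
          exact div_le_div_of_nonneg_left (by positivity) (hweight i) (hr_lower i)
      _ ≤ s / b * (4 / √k) := by
          rw [← mul_sum, Fin.sum_univ_eq_sum_range (fun i => 1 / (((i : ℝ) + 1) * (k - i)))]
          gcongr
          exact sum_range_inv_succ_mul_sub_le k
      _ = ε * (√k / √k) := by simp only [s]; field_simp
      _ ≤ ε := mul_le_of_le_one_right hε (div_self_le_one _)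
  refine (pi_expMeasure_abs_sum_gt_le hr (fun i => by have := hr i; positivity) hsum).trans_eq ?_
  simp_rw [mul_div_cancel₀ s (hr _).ne']
  rw [sum_const, card_univ, Fintype.card_fin, nsmul_eq_mul, ENNReal.ofReal_mul (by positivity),
    ENNReal.ofReal_natCast]

theorem summable_natCast_mul_exp_neg_mul_sqrt {d : ℝ} (hd : 0 < d) :
    Summable fun k : ℕ => k * exp (-(d * √k)) := by
  -- `exp x ≥ x ^ 6 / 6!` gives `k * exp (-(d * √k)) ≤ 6! / d ^ 6 * (1 / k ^ 2)`.
  refine Summable.of_nonneg_of_le (fun k => by positivity) (fun k => ?_)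
    ((summable_one_div_nat_pow.2 one_lt_two).mul_left (Nat.factorial 6 / d ^ 6))
  rcases Nat.eq_zero_or_pos k with rfl | hk
  · simp
  have hk' : (0 : ℝ) < k := by exact_mod_cast hk
  have hexp := Real.pow_div_factorial_le_exp _ (mul_nonneg hd.le (Real.sqrt_nonneg k)) 6
  have h6 : (d * √k) ^ 6 = d ^ 6 * k ^ 3 := by
    rw [mul_pow, show √(k : ℝ) ^ 6 = (√k ^ 2) ^ 3 by ring, Real.sq_sqrt hk'.le]
  rw [h6] at hexp
  rw [exp_neg, ← div_eq_mul_inv, div_le_iff₀ (exp_pos _)]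
  calc (k : ℝ) = Nat.factorial 6 / d ^ 6 * (1 / k ^ 2) * (d ^ 6 * k ^ 3 / Nat.factorial 6) := by
        field_simp
    _ ≤ Nat.factorial 6 / d ^ 6 * (1 / k ^ 2) * exp (d * √k) := by gcongr

theorem ae_tendsto_zero_of_tsum_measure_abs_gt_ne_top {Ω : Type*} [MeasurableSpace Ω]
    {μ : Measure Ω} {X : ℕ → Ω → ℝ} (h : ∀ ε > 0, ∑' k, μ {ω | ε < |X k ω|} ≠ ∞) :
    ∀ᵐ ω ∂μ, Tendsto (fun k => X k ω) atTop (nhds 0) := by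
  have h_eventually (m : ℕ) : ∀ᵐ ω ∂μ, ∀ᶠ k in atTop, |X k ω| ≤ 1 / ((m : ℝ) + 1) := by
    filter_upwards [ae_eventually_notMem (h (1 / ((m : ℝ) + 1)) (by positivity))] with ω hω
    filter_upwards [hω] with k hk using not_lt.1 hk
  filter_upwards [ae_all_iff.2 h_eventually] with ω hω
  rw [Metric.tendsto_atTop]
  intro ε hε
  obtain ⟨m, hm⟩ := exists_nat_one_div_lt hε
  obtain ⟨N, hN⟩ := eventually_atTop.1 (hω m)
  exact ⟨N, fun k hk => by rw [Real.dist_0_eq_abs]; exact (hN k hk).trans_lt hm⟩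

/-- If for each `k ≥ 1` the random variable `T k` has the law of a sum of `k` independent
exponential random variables with rates `a(1+ic)(n_k - i)`, `i = 0,…,k-1`, where `n_k ≥ k`,
then `T k → 0` almost surely as `k → ∞`.  (In particular, with `n_k = k`, the
last-to-default time `τ^n(n)` tends to `0` almost surely as `n → ∞`.) -/
theorem last_default_time_tendsto_zero
    {Ω : Type*} [MeasureSpace Ω] [IsProbabilityMeasure (ℙ : Measure Ω)]
    (a c : ℝ) (ha : 0 < a) (hc : 0 < c)
    (nk : ℕ → ℕ) (hnk : ∀ k, 1 ≤ k → k ≤ nk k)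
    (T : ℕ → Ω → ℝ) (hTmeas : ∀ k, Measurable (T k))
    (hlaw : ∀ k, 1 ≤ k →
      Measure.map (T k) ℙ =
        Measure.map (fun x : Fin k → ℝ => ∑ i, x i)
          (Measure.pi (fun i : Fin k =>
            expMeasure (a * (1 + (i : ℝ) * c) * ((nk k : ℝ) - (i : ℝ)))))) :
    ∀ᵐ ω ∂(ℙ : Measure Ω), Tendsto (fun k => T k ω) atTop (nhds 0) := by
  suffices ∀ᵐ ω ∂(ℙ : Measure Ω), Tendsto (fun k => T (k + 1) ω) atTop (nhds 0) by
    filter_upwards [this] with ω hω using (tendsto_add_atTop_iff_nat 1).1 hω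
  refine ae_tendsto_zero_of_tsum_measure_abs_gt_ne_top fun ε hε => ?_
  set f : ℕ → ℝ := fun k => k * exp (-(ε * (a * min 1 c) / 4 * √k))
  have hf : Summable fun k => f (k + 1) := (summable_nat_add_iff 1).2
    (summable_natCast_mul_exp_neg_mul_sqrt (by have := lt_min one_pos hc; positivity))
  have htail (k : ℕ) : ℙ {ω | ε < |T (k + 1) ω|} ≤ ENNReal.ofReal (f (k + 1)) := by
    have hset : MeasurableSet {y : ℝ | ε < |y|} := measurableSet_lt measurable_const measurable_abs
    calc ℙ {ω | ε < |T (k + 1) ω|} = Measure.map (T (k + 1)) ℙ {y | ε < |y|} :=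
          (Measure.map_apply (hTmeas _) hset).symm
      _ ≤ ENNReal.ofReal (f (k + 1)) := by
          rw [hlaw _ (Nat.le_add_left 1 k), Measure.map_apply (by fun_prop) hset]
          exact pi_contagionRate_abs_sum_gt_le ha hc hε.le (hnk _ (Nat.le_add_left 1 k))
  refine ne_top_of_le_ne_top ?_ (ENNReal.tsum_le_tsum htail)
  rw [← ENNReal.ofReal_tsum_of_nonneg (fun k => by positivity) hf]
  exact ENNReal.ofReal_ne_top
end

section
/- For every a > 0, c > 0 and every integer k ≥ 1, Σ_{i=0}^{k−1} 1/(a(1+ic)(k−i)) < ((2c+2)/(a(ck+1))) · ( 1 + (1/c)·ln(1+ck) ). -/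
/-!
Partial fractions split `1 / ((1 + i c)(k - i))` as `(c / (1 + i c) + 1 / (k - i)) / (1 + c k)`.
The second pieces sum to the harmonic number `H_k ≤ 1 + log k`, and the first to at most
`c + H_k`, so the sum is at most `(c + 2 + 2 log k) / (a (1 + c k))`. Bernoulli's inequality
`1 + k ≤ (1 + c k) ^ (1 + 1/c)` trades `log k` for `(1 + 1/c) log (1 + c k)`, and `c > 0` makes
the final comparison strict.
-/

open Finset Real

lemma sum_range_one_div_sub_eq_harmonic (k : ℕ) :
    ∑ i ∈ range k, 1 / ((k : ℝ) - i) = harmonic k := by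
  rw [← sum_range_reflect, harmonic, Rat.cast_sum]
  refine sum_congr rfl fun i hi => ?_
  rw [show k - 1 - i = k - (i + 1) by omega, Nat.cast_sub (by simp at hi; omega)]
  push_cast
  ring

lemma sum_range_div_one_add_mul_le_add_harmonic {c : ℝ} (hc : 0 ≤ c) (k : ℕ) :
    ∑ i ∈ range k, c / (1 + i * c) ≤ c + harmonic k := by
  cases k with
  | zero => simpa using hc
  | succ m =>
    have hterm : ∑ i ∈ range m, c / (1 + ((i + 1 : ℕ) : ℝ) * c) ≤ harmonic m := by
      rw [harmonic, Rat.cast_sum]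
      gcongr with i
      rw [Rat.cast_inv, Rat.cast_natCast, div_le_iff₀ (by positivity)]
      field_simp
      linarith
    have hlast : (0 : ℝ) ≤ ((m + 1 : ℕ) : ℝ)⁻¹ := by positivity
    rw [sum_range_succ', harmonic_succ, Nat.cast_zero, zero_mul, add_zero, div_one]
    push_cast at hterm hlast ⊢
    linarith

lemma sum_range_one_div_mul_sub_eq {c : ℝ} (hc : 0 ≤ c) (k : ℕ) :
    ∑ i ∈ range k, 1 / ((1 + i * c) * ((k : ℝ) - i)) =
      (∑ i ∈ range k, c / (1 + i * c) + harmonic k) / (1 + c * k) := by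
  rw [← sum_range_one_div_sub_eq_harmonic, ← sum_add_distrib, sum_div]
  refine sum_congr rfl fun i hi => ?_
  have hik : (i : ℝ) < k := by simpa using hi
  have : 0 < (k : ℝ) - i := by linarith
  field_simp
  ring

lemma log_le_one_add_inv_mul_log_one_add_mul {c x : ℝ} (hc : 0 < c) (hx : 0 ≤ x) :
    log x ≤ (1 + 1 / c) * log (1 + c * x) := by
  have hbernoulli : 1 + x ≤ (1 + c * x) ^ (1 + 1 / c) :=
    calc 1 + x ≤ 1 + (1 + 1 / c) * (c * x) := by field_simp; nlinarith
      _ ≤ (1 + c * x) ^ (1 + 1 / c) :=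
        one_add_mul_self_le_rpow_one_add (by nlinarith) (by simp; positivity)
  calc log x ≤ log (1 + x) := by
        rcases hx.eq_or_lt with rfl | hx
        · simp
        · exact log_le_log hx (by linarith)
    _ ≤ log ((1 + c * x) ^ (1 + 1 / c)) := log_le_log (by linarith) hbernoulli
    _ = (1 + 1 / c) * log (1 + c * x) := log_rpow (by positivity) _

theorem sum_mean_bound_general
    (a c : ℝ) (ha : 0 < a) (hc : 0 < c) (k : ℕ) :
    ∑ i ∈ Finset.range k, 1 / (a * (1 + (i : ℝ) * c) * ((k : ℝ) - (i : ℝ))) <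
      ((2 * c + 2) / (a * (c * (k : ℝ) + 1))) * (1 + (1 / c) * Real.log (1 + c * (k : ℝ))) := by
  set L := log (1 + c * k)
  have hsplit : ∑ i ∈ range k, 1 / (a * (1 + (i : ℝ) * c) * ((k : ℝ) - i)) =
      (∑ i ∈ range k, c / (1 + i * c) + harmonic k) / (a * (c * k + 1)) := by
    have hfactor (i : ℕ) : 1 / (a * (1 + (i : ℝ) * c) * ((k : ℝ) - i)) =
        1 / ((1 + i * c) * ((k : ℝ) - i)) / a := by rw [mul_assoc, mul_comm, ← div_div]
    simp_rw [hfactor, ← sum_div, sum_range_one_div_mul_sub_eq hc.le, div_div,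
      mul_comm (1 + c * (k : ℝ)) a, add_comm 1 (c * (k : ℝ))]
  have hfirst := sum_range_div_one_add_mul_le_add_harmonic hc.le k
  have hharm := harmonic_le_one_add_log k
  have hlog := log_le_one_add_inv_mul_log_one_add_mul hc k.cast_nonneg
  have hexpand : (2 * c + 2) * (1 + 1 / c * L) = 2 * c + 2 + 2 * ((1 + 1 / c) * L) := by
    field_simp
  rw [hsplit, div_mul_eq_mul_div, div_lt_div_iff_of_pos_right (by positivity), hexpand]
  linarith

/-- Key estimate: for `a > 0`, `c > 0` and `k ≥ 1`,
`Σ_{i=0}^{k-1} 1/(a(1+ic)(k-i)) < ((2c+2)/(a(ck+1))) (1 + (1/c) ln(1+ck))`. -/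
theorem sum_mean_bound
    (a c : ℝ) (ha : 0 < a) (hc : 0 < c) (k : ℕ) (hk : 1 ≤ k) :
    ∑ i ∈ Finset.range k, 1 / (a * (1 + (i : ℝ) * c) * ((k : ℝ) - (i : ℝ))) <
      ((2 * c + 2) / (a * (c * (k : ℝ) + 1))) * (1 + (1 / c) * Real.log (1 + c * (k : ℝ))) :=
  sum_mean_bound_general a c ha hc k
end

section
/- Let a > 0, c > 0 and integers 1 ≤ k ≤ n. Then Σ_{i=0}^{k−1} 1/(a(1+ic)(n−i))^2 < ((2c+2)/(a(ck+1)))^2 · Σ_{i=0}^{∞} 1/(1+ic)^2, and the series Σ_{i=0}^{∞} 1/(1+ic)^2 converges. -/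
/-!
Writing `m = k - i ≥ 1`, the partial-fraction identity
`1 / ((1 + i c) m) = c / (c k + 1) · (1 / (1 + i c) + 1 / (c m))` together with
`1 + m c ≤ (1 + c) m` gives `1 / ((1 + i c)(n - i)) ≤ (c + 1) / (c k + 1) · (f i + f (k - i))`
with `f j = 1 / (1 + j c)`. Squaring with `(x + y)² ≤ 2 (x² + y²)` and summing, the two halves
`∑_{i<k} f i²` and `∑_{i<k} f (k - i)² = ∑_{1 ≤ j ≤ k} f j²` together are at most
`2 ∑' f² - f 0² < 2 ∑' f²`.
-/

open Finset

lemma summable_one_div_one_add_mul_sq {c : ℝ} (hc : 0 < c) :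
    Summable fun i : ℕ => 1 / (1 + i * c) ^ 2 := by
  refine (((Real.summable_one_div_nat_add_rpow c⁻¹ 2).2 one_lt_two).mul_left (c ^ 2)⁻¹).congr
    fun i => ?_
  rw [Real.rpow_two, sq_abs]
  field_simp
  ring

lemma sum_range_add_reflect_le_two_mul_tsum_sub {g : ℕ → ℝ} (hg : Summable g)
    (hg0 : ∀ i, 0 ≤ g i) (k : ℕ) :
    ∑ i ∈ range k, (g i + g (k - i)) ≤ 2 * ∑' i, g i - g 0 := by
  have hfirst : ∑ i ∈ range k, g i ≤ ∑' i, g i := hg.sum_le_tsum _ fun i _ => hg0 i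
  have hlast : ∑ i ∈ range k, g (k - i) + g 0 ≤ ∑' i, g i := by
    have hreflect : ∑ i ∈ range k, g (k - i) = ∑ j ∈ range k, g (j + 1) := by
      rw [← sum_range_reflect]
      exact sum_congr rfl fun i hi => by rw [mem_range] at hi; congr 1; omega
    rw [hreflect, ← sum_range_succ']
    exact hg.sum_le_tsum _ fun i _ => hg0 i
  rw [sum_add_distrib]
  linarith

lemma one_div_one_add_mul_mul_le {c x m : ℝ} (hc : 0 < c) (hx : 0 ≤ x) (hm : 1 ≤ m) :
    1 / ((1 + x * c) * m) ≤
      (c + 1) / (c * (x + m) + 1) * (1 / (1 + x * c) + 1 / (1 + m * c)) := by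
  have hxc : 0 < 1 + x * c := by positivity
  have hmc : 0 < 1 + m * c := by positivity
  rw [div_add_div _ _ hxc.ne' hmc.ne', div_mul_div_comm,
    div_le_div_iff₀ (by positivity) (by positivity)]
  nlinarith [mul_nonneg hx hc.le, mul_nonneg (mul_nonneg hx hc.le) hc.le,
    mul_nonneg (sub_nonneg.2 hm) hc.le,
    mul_nonneg (mul_nonneg (sub_nonneg.2 hm) hc.le) (mul_nonneg hx hc.le)]

lemma sq_one_div_mul_sub_le {a c : ℝ} (ha : 0 < a) (hc : 0 < c) {i k n : ℕ} (hik : i < k)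
    (hkn : k ≤ n) :
    (1 / (a * (1 + i * c) * (n - i))) ^ 2 ≤
      2 * ((c + 1) / (a * (c * k + 1))) ^ 2 *
        (1 / (1 + i * c) ^ 2 + 1 / (1 + (k - i : ℕ) * c) ^ 2) := by
  set m : ℝ := ((k - i : ℕ) : ℝ)
  have hm : m = k - i := Nat.cast_sub hik.le
  have hm1 : 1 ≤ m := by rw [hm, le_sub_iff_add_le']; exact_mod_cast hik
  have hmn : m ≤ n - i := by rw [hm]; gcongr
  have hsplit := one_div_one_add_mul_mul_le hc (Nat.cast_nonneg i) hm1
  rw [show (i : ℝ) + m = k by rw [hm]; ring] at hsplit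
  have hpos : 0 < a * (1 + i * c) * m := by positivity
  calc (1 / (a * (1 + i * c) * (n - i))) ^ 2
      ≤ (1 / (a * (1 + i * c) * m)) ^ 2 := by
        gcongr
        exact (one_div_pos.2 (hpos.trans_le (by gcongr))).le
    _ = (1 / ((1 + i * c) * m) / a) ^ 2 := by rw [div_div, mul_comm _ a, mul_assoc]
    _ ≤ ((c + 1) / (c * k + 1) * (1 / (1 + i * c) + 1 / (1 + m * c)) / a) ^ 2 := by gcongr
    _ = ((c + 1) / (a * (c * k + 1))) ^ 2 * (1 / (1 + i * c) + 1 / (1 + m * c)) ^ 2 := by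
        rw [div_mul_eq_div_div_swap]; ring
    _ ≤ ((c + 1) / (a * (c * k + 1))) ^ 2 *
          (2 * ((1 / (1 + i * c)) ^ 2 + (1 / (1 + m * c)) ^ 2)) := by
        gcongr
        exact add_sq_le
    _ = _ := by rw [one_div_pow, one_div_pow]; ring

theorem variance_bound_and_summable_general
    (a c : ℝ) (ha : 0 < a) (hc : 0 < c) (k n : ℕ) (hkn : k ≤ n) :
    (∑ i ∈ Finset.range k, (1 / (a * (1 + (i : ℝ) * c) * ((n : ℝ) - (i : ℝ)))) ^ 2 <
        ((2 * c + 2) / (a * (c * (k : ℝ) + 1))) ^ 2 *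
          ∑' i : ℕ, 1 / (1 + (i : ℝ) * c) ^ 2) ∧
      Summable (fun i : ℕ => 1 / (1 + (i : ℝ) * c) ^ 2) := by
  set g : ℕ → ℝ := fun i => 1 / (1 + i * c) ^ 2
  have hg : Summable g := summable_one_div_one_add_mul_sq hc
  have hg0 : g 0 = 1 := by simp [g]
  set C := (c + 1) / (a * (c * k + 1))
  have hC : 0 < C := by positivity
  refine ⟨?_, hg⟩
  calc ∑ i ∈ range k, (1 / (a * (1 + (i : ℝ) * c) * ((n : ℝ) - (i : ℝ)))) ^ 2
      ≤ ∑ i ∈ range k, 2 * C ^ 2 * (g i + g (k - i)) :=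
        sum_le_sum fun i hi => sq_one_div_mul_sub_le ha hc (mem_range.1 hi) hkn
    _ = 2 * C ^ 2 * ∑ i ∈ range k, (g i + g (k - i)) := (mul_sum ..).symm
    _ ≤ 2 * C ^ 2 * (2 * ∑' i, g i - g 0) := by
        gcongr
        exact sum_range_add_reflect_le_two_mul_tsum_sub hg (fun i => by positivity) k
    _ < (2 * C) ^ 2 * ∑' i, g i := by rw [hg0]; nlinarith [pow_pos hC 2]
    _ = _ := by congr 2; ring

/-- Variance bound: for `a, c > 0` and `1 ≤ k ≤ n`,
`Σ_{i<k} (1/(a(1+ic)(n-i)))² < ((2c+2)/(a(ck+1)))² Σ_{i=0}^∞ 1/(1+ic)²`,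
and the series `Σ_{i=0}^∞ 1/(1+ic)²` converges. -/
theorem variance_bound_and_summable
    (a c : ℝ) (ha : 0 < a) (hc : 0 < c) (k n : ℕ) (hk : 1 ≤ k) (hkn : k ≤ n) :
    (∑ i ∈ Finset.range k, (1 / (a * (1 + (i : ℝ) * c) * ((n : ℝ) - (i : ℝ)))) ^ 2 <
        ((2 * c + 2) / (a * (c * (k : ℝ) + 1))) ^ 2 *
          ∑' i : ℕ, 1 / (1 + (i : ℝ) * c) ^ 2) ∧
      Summable (fun i : ℕ => 1 / (1 + (i : ℝ) * c) ^ 2) :=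
  variance_bound_and_summable_general a c ha hc k n hkn
end

section
/- Let n ≥ 2 be an integer, c ≥ 0 with c ≠ 1/i for every integer 1 ≤ i ≤ n−1, and let x : [0,∞) → (0,∞) be continuous. Define F(t) = ∫_0^t x(u) du, and define functions f_k recursively by f_1(t) = n x(t) e^{−n F(t)} and, for 1 ≤ k ≤ n−1, f_{k+1}(t) = (n−k)(1+kc) x(t) ∫_0^t f_k(u) e^{−(n−k)(1+kc)(F(t)−F(u))} du. Then for every 1 ≤ k ≤ n and t ≥ 0, f_k(t) = Σ_{j=0}^{k−1} α_{k,j} x(t) e^{−β_j F(t)}, where β_j = (n−j)(1+jc) and the coefficients satisfy α_{1,0} = n, α_{k+1,j} = α_{k,j} β_k/(β_k−β_j) for 0 ≤ j ≤ k−1, α_{k+1,k} = −Σ_{u=0}^{k−1} α_{k,u} β_k/(β_k−β_u). -/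
/-!
Each `f k` is a combination of terms `x t * exp (-(β j * F t))`. Since `F' = x`, the
substitution `y = F u` gives, for `p ≠ q`,
`∫₀ᵗ x u e^{-p F u} e^{-q (F t - F u)} du = (e^{-p F t} - e^{-q F t}) / (q - p)`,
so one step of the recursion with rate `q = β k` sends the term of rate `β j` to terms of rates
`β j` and `β k`, which is exactly the recursion for `α`. The denominators do not vanish because
`β j - β k = (k - j) (1 - c (n - k - j))` and `c ≠ 1 / (n - k - j)`.
-/

open MeasureTheory Real Set intervalIntegral

theorem integral_mul_exp_mul_eq_of_hasDerivAt {x F : ℝ → ℝ} {a b k : ℝ}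
    (hFc : ContinuousOn F (uIcc a b)) (hF : ∀ u ∈ Ioo (min a b) (max a b), HasDerivAt F (x u) u)
    (hx : IntervalIntegrable x volume a b) (hk : k ≠ 0) :
    ∫ u in a..b, x u * exp (k * F u) = (exp (k * F b) - exp (k * F a)) / k := by
  have hG : ∀ u ∈ Ioo (min a b) (max a b),
      HasDerivAt (fun u => exp (k * F u) / k) (x u * exp (k * F u)) u := fun u hu =>
    (((hF u hu).const_mul k).exp.div_const k).congr_deriv (by field_simp)
  have hexp : ContinuousOn (fun u => exp (k * F u)) (uIcc a b) := by fun_prop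
  rw [integral_eq_sub_of_hasDeriv_right (hexp.div_const k)
    (fun u hu => (hG u hu).hasDerivWithinAt) (hx.mul_continuousOn hexp), sub_div]

theorem hasDerivAt_integral_of_mem_Ioo {x : ℝ → ℝ} {a b u : ℝ}
    (hx : ContinuousOn x (uIcc a b)) (hu : u ∈ Ioo (min a b) (max a b)) :
    HasDerivAt (fun s => ∫ v in a..s, x v) (x u) u :=
  integral_hasDerivAt_right
    ((hx.mono (uIcc_subset_uIcc left_mem_uIcc (Ioo_subset_Icc_self hu))).intervalIntegrable)
    ((hx.mono Ioo_subset_Icc_self).stronglyMeasurableAtFilter isOpen_Ioo u hu)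
    (hx.continuousAt (Icc_mem_nhds hu.1 hu.2))

theorem sub_mul_one_add_mul_ne_of_lt {n m j : ℕ} {c : ℝ} (hc : 0 ≤ c)
    (hcne : ∀ i : ℕ, 1 ≤ i → i ≤ n - 1 → c ≠ 1 / (i : ℝ)) (hjm : j < m) :
    ((n : ℝ) - j) * (1 + j * c) ≠ ((n : ℝ) - m) * (1 + m * c) := by
  have hdiff : ((n : ℝ) - j) * (1 + j * c) - ((n : ℝ) - m) * (1 + m * c)
      = ((m : ℝ) - j) * (1 - c * ((n : ℝ) - m - j)) := by ring
  have hmj : (0 : ℝ) < m - j := sub_pos.mpr (by exact_mod_cast hjm)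
  rw [← sub_ne_zero, hdiff]
  refine mul_ne_zero hmj.ne' ?_
  rcases le_or_gt n (m + j) with hle | hlt
  · have hle' : (n : ℝ) ≤ m + j := by exact_mod_cast hle
    nlinarith
  · have hi : (((n - m - j : ℕ) : ℝ)) = (n : ℝ) - m - j := by
      rw [Nat.cast_sub (by omega), Nat.cast_sub (by omega)]
    have hci := hcne (n - m - j) (by omega) (by omega)
    rw [hi, ne_eq, eq_div_iff (by rw [← hi]; exact_mod_cast (by omega : n - m - j ≠ 0))] at hci
    exact sub_ne_zero.mpr (Ne.symm hci)

section Convolution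

variable {x : ℝ → ℝ} {t : ℝ}

theorem integral_mul_exp_mul_exp_sub {p q : ℝ} (hpq : p ≠ q) (hx : ContinuousOn x (uIcc 0 t))
    {F : ℝ → ℝ} (hF : F = fun u => ∫ v in (0 : ℝ)..u, x v) :
    ∫ u in (0 : ℝ)..t, x u * exp (-(p * F u)) * exp (-(q * (F t - F u)))
      = (exp (-(p * F t)) - exp (-(q * F t))) / (q - p) := by
  have hFc : ContinuousOn F (uIcc 0 t) :=
    hF ▸ continuousOn_primitive_interval' hx.intervalIntegrable left_mem_uIcc
  have hF0 : F 0 = 0 := hF ▸ integral_same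
  have hsplit : ∀ u, x u * exp (-(p * F u)) * exp (-(q * (F t - F u)))
      = exp (-(q * F t)) * (x u * exp ((q - p) * F u)) := fun u => by
    rw [mul_left_comm, mul_assoc, ← exp_add, ← exp_add]; ring_nf
  simp_rw [hsplit]
  rw [intervalIntegral.integral_const_mul, integral_mul_exp_mul_eq_of_hasDerivAt hFc
    (fun u hu => hF ▸ hasDerivAt_integral_of_mem_Ioo hx hu) hx.intervalIntegrable
    (sub_ne_zero.mpr hpq.symm), hF0, mul_zero, exp_zero, mul_div_assoc', mul_sub, mul_one,
    ← exp_add]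
  ring_nf

theorem mul_integral_sum_mul_exp_mul_exp_sub {ι : Type*} (s : Finset ι) (a b : ι → ℝ)
    {q : ℝ} (hq : ∀ j ∈ s, b j ≠ q) (hx : ContinuousOn x (uIcc 0 t))
    {F : ℝ → ℝ} (hF : F = fun u => ∫ v in (0 : ℝ)..u, x v) {g : ℝ → ℝ}
    (hg : EqOn g (fun u => ∑ j ∈ s, a j * x u * exp (-(b j * F u))) (uIcc 0 t)) :
    q * x t * ∫ u in (0 : ℝ)..t, g u * exp (-(q * (F t - F u)))
      = ∑ j ∈ s, a j * q / (q - b j) * x t * exp (-(b j * F t))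
        - (∑ j ∈ s, a j * q / (q - b j)) * x t * exp (-(q * F t)) := by
  have hFc : ContinuousOn F (uIcc 0 t) :=
    hF ▸ continuousOn_primitive_interval' hx.intervalIntegrable left_mem_uIcc
  have hint : ∫ u in (0 : ℝ)..t, g u * exp (-(q * (F t - F u)))
      = ∑ j ∈ s, a j * ((exp (-(b j * F t)) - exp (-(q * F t))) / (q - b j)) := by
    rw [integral_congr (g := fun u => ∑ j ∈ s,
        a j * (x u * exp (-(b j * F u)) * exp (-(q * (F t - F u))))) fun u hu => by
      simp only [hg hu, Finset.sum_mul, mul_assoc]]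
    rw [integral_finsetSum fun j _ => ContinuousOn.intervalIntegrable (by fun_prop)]
    refine Finset.sum_congr rfl fun j hj => ?_
    rw [intervalIntegral.integral_const_mul, integral_mul_exp_mul_exp_sub (hq j hj) hx hF]
  rw [hint, Finset.mul_sum, Finset.sum_mul, Finset.sum_mul, ← Finset.sum_sub_distrib]
  refine Finset.sum_congr rfl fun j hj => ?_
  have hqj : q - b j ≠ 0 := sub_ne_zero.mpr (hq j hj).symm
  field_simp

end Convolution

theorem stochastic_intensity_density_closed_form_general
    (n : ℕ) (c : ℝ) (hc : 0 ≤ c)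
    (hcne : ∀ i : ℕ, 1 ≤ i → i ≤ n - 1 → c ≠ 1 / (i : ℝ))
    (x : ℝ → ℝ) (hxcont : ContinuousOn x (Ici 0))
    (F : ℝ → ℝ) (hF : ∀ t, F t = ∫ u in (0 : ℝ)..t, x u)
    (β : ℕ → ℝ) (hβ : ∀ j ≤ n - 1, β j = ((n : ℝ) - (j : ℝ)) * (1 + (j : ℝ) * c))
    (α : ℕ → ℕ → ℝ) (hα1 : α 1 0 = n)
    (hαrec : ∀ k, 1 ≤ k → k ≤ n - 1 →
      (∀ j ≤ k - 1, α (k + 1) j = α k j * β k / (β k - β j)) ∧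
      α (k + 1) k = -∑ u ∈ Finset.range k, α k u * β k / (β k - β u))
    (f : ℕ → ℝ → ℝ)
    (hf1 : ∀ t, 0 ≤ t → f 1 t = n * x t * Real.exp (-(n * F t)))
    (hfrec : ∀ k, 1 ≤ k → k ≤ n - 1 → ∀ t, 0 ≤ t →
      f (k + 1) t =
        ((n : ℝ) - (k : ℝ)) * (1 + (k : ℝ) * c) * x t *
          ∫ u in (0 : ℝ)..t,
            f k u * Real.exp (-(((n : ℝ) - (k : ℝ)) * (1 + (k : ℝ) * c) * (F t - F u)))) :
    ∀ k, 1 ≤ k → k ≤ n → ∀ t, 0 ≤ t →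
      f k t = ∑ j ∈ Finset.range k, α k j * x t * Real.exp (-(β j * F t)) := by
  intro k hk
  induction k, hk using Nat.le_induction with
  | base =>
    intro _ t ht
    rw [hf1 t ht, Finset.sum_range_one, hα1, hβ 0 (Nat.zero_le _)]
    simp
  | succ m hm ih =>
    intro hmn t ht
    have hm' : m ≤ n - 1 := by omega
    have hx : ContinuousOn x (uIcc 0 t) := hxcont.mono (uIcc_of_le ht ▸ Icc_subset_Ici_self)
    have hβne : ∀ j ∈ Finset.range m, β j ≠ β m := fun j hj => by
      have hjm := Finset.mem_range.mp hj
      rw [hβ j (by omega), hβ m hm']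
      exact sub_mul_one_add_mul_ne_of_lt hc hcne hjm
    have hfm : EqOn (f m) (fun u => ∑ j ∈ Finset.range m, α m j * x u * exp (-(β j * F u)))
        (uIcc 0 t) := fun u hu => ih (by omega) u (by rw [uIcc_of_le ht] at hu; exact hu.1)
    rw [hfrec m hm hm' t ht, ← hβ m hm',
      mul_integral_sum_mul_exp_mul_exp_sub _ _ _ hβne hx (funext hF) hfm,
      Finset.sum_range_succ, (hαrec m hm hm').2, neg_mul, neg_mul, ← sub_eq_add_neg]
    congr 1
    exact Finset.sum_congr rfl fun j hj => by
      rw [(hαrec m hm hm').1 j (by have := Finset.mem_range.mp hj; omega)]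

/-- Closed-form solution of the conditional density recursion in the homogeneous contagion
model with exogenous stochastic intensity: with `F t = ∫_0^t x(u) du`,
`f 1 t = n x(t) e^{-n F(t)}` and
`f (k+1) t = (n-k)(1+kc) x(t) ∫_0^t f k u e^{-(n-k)(1+kc)(F(t)-F(u))} du`,
one has `f k t = Σ_{j<k} α k j x(t) e^{-β j F(t)}` for `1 ≤ k ≤ n` and `t ≥ 0`. -/
theorem stochastic_intensity_density_closed_form
    (n : ℕ) (hn : 2 ≤ n) (c : ℝ) (hc : 0 ≤ c)
    (hcne : ∀ i : ℕ, 1 ≤ i → i ≤ n - 1 → c ≠ 1 / (i : ℝ))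
    (x : ℝ → ℝ) (hxcont : ContinuousOn x (Ici 0)) (hxpos : ∀ t, 0 ≤ t → 0 < x t)
    (F : ℝ → ℝ) (hF : ∀ t, F t = ∫ u in (0 : ℝ)..t, x u)
    (β : ℕ → ℝ) (hβ : ∀ j ≤ n - 1, β j = ((n : ℝ) - (j : ℝ)) * (1 + (j : ℝ) * c))
    (α : ℕ → ℕ → ℝ) (hα1 : α 1 0 = n)
    (hαrec : ∀ k, 1 ≤ k → k ≤ n - 1 →
      (∀ j ≤ k - 1, α (k + 1) j = α k j * β k / (β k - β j)) ∧
      α (k + 1) k = -∑ u ∈ Finset.range k, α k u * β k / (β k - β u))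
    (f : ℕ → ℝ → ℝ)
    (hf1 : ∀ t, 0 ≤ t → f 1 t = n * x t * Real.exp (-(n * F t)))
    (hfrec : ∀ k, 1 ≤ k → k ≤ n - 1 → ∀ t, 0 ≤ t →
      f (k + 1) t =
        ((n : ℝ) - (k : ℝ)) * (1 + (k : ℝ) * c) * x t *
          ∫ u in (0 : ℝ)..t,
            f k u * Real.exp (-(((n : ℝ) - (k : ℝ)) * (1 + (k : ℝ) * c) * (F t - F u)))) :
    ∀ k, 1 ≤ k → k ≤ n → ∀ t, 0 ≤ t →
      f k t = ∑ j ∈ Finset.range k, α k j * x t * Real.exp (-(β j * F t)) :=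
  stochastic_intensity_density_closed_form_general n c hc hcne x hxcont F hF β hβ α hα1 hαrec f hf1
    hfrec
end

section
/- Let η₁ > 0, η₂ > 0 and l > 0. Set α = (η₁+η₂+l)/2, β = (η₁+η₂−l)/2 and ω = lη₂ − α². Then ω < 0, the function ψ₁(t) = e^{−αt}[ cosh(√(−ω) t) + (β/√(−ω)) sinh(√(−ω) t) ] is integrable against e^{−st} on (0,∞) for every s ≥ 0, and its Laplace transform satisfies ∫_0^∞ e^{−st} ψ₁(t) dt = (s + η₁ + η₂)/(s² + s(η₁+η₂+l) + lη₂) for every s ≥ 0. -/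
open MeasureTheory Real Set

/-!
Splitting `cosh` and `sinh` into exponentials writes `e^{-at}(cosh rt + k sinh rt)` as a
combination of `e^{-(a-r)t}` and `e^{-(a+r)t}`, so for `|r| < a` its integral over `(0, ∞)` is
`(a + k r)/(a² - r²)`. Multiplying `ψ₁` by `e^{-st}` only shifts `a = α` to `s + α`, and
`r = √(-ω)` satisfies `r² = α² - lη₂`, which turns `(s + α)² - r²` into the quadratic denominator.
-/

theorem integral_exp_mul_Ioi_zero {a : ℝ} (ha : a < 0) :
    ∫ t in Ioi (0 : ℝ), exp (a * t) = -a⁻¹ := by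
  simp [integral_exp_mul_Ioi ha, div_eq_inv_mul]

theorem exp_neg_mul_mul_cosh_add_mul_sinh (a r k t : ℝ) :
    exp (-a * t) * (cosh (r * t) + k * sinh (r * t)) =
      (1 + k) / 2 * exp ((r - a) * t) + (1 - k) / 2 * exp ((-r - a) * t) := by
  rw [cosh_eq, sinh_eq, show (r - a) * t = r * t + -a * t by ring,
    show (-r - a) * t = -(r * t) + -a * t by ring, exp_add, exp_add]
  ring

section DampedHyperbolic

variable {a r : ℝ} (k : ℝ)

theorem integrableOn_exp_neg_mul_mul_cosh_add_mul_sinh (hr : |r| < a) :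
    IntegrableOn (fun t => exp (-a * t) * (cosh (r * t) + k * sinh (r * t))) (Ioi 0) := by
  obtain ⟨hr₁, hr₂⟩ := abs_lt.mp hr
  simp_rw [exp_neg_mul_mul_cosh_add_mul_sinh]
  exact ((integrableOn_exp_mul_Ioi (by linarith) 0).const_mul _).add
    ((integrableOn_exp_mul_Ioi (by linarith) 0).const_mul _)

theorem integral_exp_neg_mul_mul_cosh_add_mul_sinh (hr : |r| < a) :
    ∫ t in Ioi 0, exp (-a * t) * (cosh (r * t) + k * sinh (r * t)) =
      (a + k * r) / (a ^ 2 - r ^ 2) := by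
  obtain ⟨hr₁, hr₂⟩ := abs_lt.mp hr
  have hsub : r - a < 0 := by linarith
  have hadd : -r - a < 0 := by linarith
  simp_rw [exp_neg_mul_mul_cosh_add_mul_sinh]
  rw [integral_add ((integrableOn_exp_mul_Ioi hsub 0).const_mul _)
      ((integrableOn_exp_mul_Ioi hadd 0).const_mul _),
    integral_const_mul, integral_const_mul, integral_exp_mul_Ioi_zero hsub,
    integral_exp_mul_Ioi_zero hadd, show a ^ 2 - r ^ 2 = (a - r) * (a + r) by ring]
  field_simp [hsub.ne, hadd.ne, (by linarith : a - r ≠ 0), (by linarith : a + r ≠ 0)]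
  ring

end DampedHyperbolic

/-- In the two-state regime-switching model, with `α = (η₁+η₂+l)/2`, `β = (η₁+η₂-l)/2`,
`ω = lη₂ - α²`, one has `ω < 0`, the function
`ψ₁(t) = e^{-αt}(cosh(√(-ω) t) + (β/√(-ω)) sinh(√(-ω) t))` is integrable against `e^{-st}`
on `(0,∞)` for every `s ≥ 0`, and its Laplace transform is
`(s+η₁+η₂)/(s² + s(η₁+η₂+l) + lη₂)`. -/
theorem laplace_transform_psi_one
    (η₁ η₂ l : ℝ) (hη₁ : 0 < η₁) (hη₂ : 0 < η₂) (hl : 0 < l)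
    (α β ω : ℝ) (hα : α = (η₁ + η₂ + l) / 2) (hβ : β = (η₁ + η₂ - l) / 2)
    (hω : ω = l * η₂ - α ^ 2)
    (ψ₁ : ℝ → ℝ)
    (hψ₁ : ∀ t, ψ₁ t =
      Real.exp (-α * t) *
        (Real.cosh (Real.sqrt (-ω) * t) + (β / Real.sqrt (-ω)) * Real.sinh (Real.sqrt (-ω) * t))) :
    ω < 0 ∧
      (∀ s : ℝ, 0 ≤ s → IntegrableOn (fun t => Real.exp (-s * t) * ψ₁ t) (Ioi 0)) ∧
      (∀ s : ℝ, 0 ≤ s →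
        (∫ t in Ioi (0 : ℝ), Real.exp (-s * t) * ψ₁ t) =
          (s + η₁ + η₂) / (s ^ 2 + s * (η₁ + η₂ + l) + l * η₂)) := by
  have hω_neg : ω < 0 := by
    have : ω = -(β ^ 2 + l * η₁) := by rw [hω, hα, hβ]; ring
    rw [this]; nlinarith [sq_nonneg β, mul_pos hl hη₁]
  set r := √(-ω)
  have hr_pos : 0 < r := sqrt_pos.2 (by linarith)
  have hr_sq : r ^ 2 = α ^ 2 - l * η₂ := by rw [sq_sqrt (by linarith)]; linarith
  have hr_lt (s : ℝ) (hs : 0 ≤ s) : |r| < s + α := by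
    rw [abs_of_pos hr_pos]
    nlinarith [mul_pos hl hη₂]
  have hshift (s t : ℝ) :
      exp (-s * t) * ψ₁ t = exp (-(s + α) * t) * (cosh (r * t) + β / r * sinh (r * t)) := by
    rw [hψ₁, ← mul_assoc, ← exp_add]
    ring_nf
  refine ⟨hω_neg, fun s hs => ?_, fun s hs => ?_⟩
  · simp_rw [hshift]
    exact integrableOn_exp_neg_mul_mul_cosh_add_mul_sinh _ (hr_lt s hs)
  · simp_rw [hshift, integral_exp_neg_mul_mul_cosh_add_mul_sinh _ (hr_lt s hs),
      div_mul_cancel₀ β hr_pos.ne']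
    congr 1
    · rw [hα, hβ]; ring
    · rw [hr_sq, hα]; ring
end

section
/- Let η₁ > 0, η₂ > 0 and l > 0. Set α = (η₁+η₂+l)/2, β = (η₁+η₂−l)/2, ω = lη₂ − α² (so ω < 0), and define ψ₁(t) = e^{−αt}[ cosh(√(−ω) t) + (β/√(−ω)) sinh(√(−ω) t) ] and ψ₂(t) = e^{−αt}[ cosh(√(−ω) t) + (α/√(−ω)) sinh(√(−ω) t) ]. Then for every t ≥ 0: ψ₁(t) = ∫_0^t η₁ e^{−(η₁+l)u} ψ₂(t−u) du + e^{−(η₁+l)t} and ψ₂(t) = ∫_0^t η₂ e^{−η₂ u} ψ₁(t−u) du + e^{−η₂ t}. -/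
/-!
Both `ψ₁` and `ψ₂` belong to the family `φ_p(s) = e^{-αs} (cosh (γ s) + (p/γ) sinh (γ s))`
with `γ = √(-ω)`, and for suitable `k` the integrand `k e^{-cu} φ_q(t-u)` is the exact derivative
of `u ↦ -e^{-cu} φ_p(t-u)`. Since `φ_p(0) = 1`, the fundamental theorem of calculus turns each
renewal equation into two polynomial identities among `α, β, γ, η₁, η₂, l`, which hold because
`γ² = α² - l η₂ = β² + l η₁`.
-/

open MeasureTheory Real Set intervalIntegral

noncomputable def dampedCoshSinh (α γ p s : ℝ) : ℝ :=
  exp (-α * s) * (cosh (γ * s) + p / γ * sinh (γ * s))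

@[simp]
lemma dampedCoshSinh_zero (α γ p : ℝ) : dampedCoshSinh α γ p 0 = 1 := by
  simp [dampedCoshSinh]

@[fun_prop]
lemma continuous_dampedCoshSinh (α γ p : ℝ) : Continuous (dampedCoshSinh α γ p) := by
  unfold dampedCoshSinh
  fun_prop

section Convolution

variable {α γ c p q k : ℝ}

lemma hasDerivAt_neg_exp_mul_dampedCoshSinh_sub (hγ : γ ≠ 0) (hk : k = c - α + p)
    (hq : k * q = (c - α) * p + γ ^ 2) (t u : ℝ) :
    HasDerivAt (fun u => -(exp (-c * u) * dampedCoshSinh α γ p (t - u)))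
      (k * exp (-c * u) * dampedCoshSinh α γ q (t - u)) u := by
  have hs : HasDerivAt (fun u : ℝ => t - u) (-1) u := (hasDerivAt_id u).const_sub t
  have hexp : HasDerivAt (fun u : ℝ => exp (-c * u)) (exp (-c * u) * (-c * 1)) u :=
    ((hasDerivAt_id u).const_mul (-c)).exp
  have hdamp := (hs.const_mul (-α)).exp.mul
    ((hs.const_mul γ).cosh.add ((hs.const_mul γ).sinh.const_mul (p / γ)))
  refine (hexp.mul hdamp).neg.congr_deriv ?_
  simp only [dampedCoshSinh, Pi.mul_apply, Pi.add_apply]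
  set E := exp (-c * u) * exp (-α * (t - u))
  set C := cosh (γ * (t - u))
  set S := sinh (γ * (t - u))
  linear_combination (-(E * S) / γ) * hq - E * C * hk +
    (E * C * p - E * γ * S) * mul_inv_cancel₀ hγ

theorem integral_exp_mul_dampedCoshSinh_sub (hγ : γ ≠ 0) (hk : k = c - α + p)
    (hq : k * q = (c - α) * p + γ ^ 2) (t : ℝ) :
    ∫ u in (0 : ℝ)..t, k * exp (-c * u) * dampedCoshSinh α γ q (t - u) =
      dampedCoshSinh α γ p t - exp (-c * t) := by
  rw [integral_eq_sub_of_hasDerivAt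
    (fun u _ => hasDerivAt_neg_exp_mul_dampedCoshSinh_sub hγ hk hq t u)
    (Continuous.intervalIntegrable (by fun_prop) 0 t)]
  simp only [sub_self, sub_zero, dampedCoshSinh_zero, mul_zero, exp_zero, one_mul]
  ring

end Convolution

theorem psi_solves_renewal_equations_general
    (η₁ η₂ l : ℝ) (hη₁ : 0 < η₁) (hl : 0 < l)
    (α β ω : ℝ) (hα : α = (η₁ + η₂ + l) / 2) (hβ : β = (η₁ + η₂ - l) / 2)
    (hω : ω = l * η₂ - α ^ 2)
    (ψ₁ ψ₂ : ℝ → ℝ)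
    (hψ₁ : ∀ t, ψ₁ t =
      Real.exp (-α * t) *
        (Real.cosh (Real.sqrt (-ω) * t) + (β / Real.sqrt (-ω)) * Real.sinh (Real.sqrt (-ω) * t)))
    (hψ₂ : ∀ t, ψ₂ t =
      Real.exp (-α * t) *
        (Real.cosh (Real.sqrt (-ω) * t) + (α / Real.sqrt (-ω)) * Real.sinh (Real.sqrt (-ω) * t))) :
    ∀ t, 0 ≤ t →
      (ψ₁ t = (∫ u in (0 : ℝ)..t, η₁ * Real.exp (-(η₁ + l) * u) * ψ₂ (t - u)) +
          Real.exp (-(η₁ + l) * t)) ∧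
      (ψ₂ t = (∫ u in (0 : ℝ)..t, η₂ * Real.exp (-η₂ * u) * ψ₁ (t - u)) +
          Real.exp (-η₂ * t)) := by
  intro t _
  have hω_pos : 0 < -ω := by
    have : -ω = β ^ 2 + l * η₁ := by rw [hω, hα, hβ]; ring
    rw [this]
    positivity
  set γ := √(-ω)
  have hγ : γ ≠ 0 := (sqrt_pos.mpr hω_pos).ne'
  have hγ_sq : γ ^ 2 = α ^ 2 - l * η₂ := by rw [sq_sqrt hω_pos.le, hω]; ring
  obtain rfl : ψ₁ = dampedCoshSinh α γ β := funext hψ₁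
  obtain rfl : ψ₂ = dampedCoshSinh α γ α := funext hψ₂
  constructor
  · rw [integral_exp_mul_dampedCoshSinh_sub (p := β) hγ (by rw [hα, hβ]; ring)
      (by rw [hγ_sq, hα, hβ]; ring)]
    ring
  · rw [integral_exp_mul_dampedCoshSinh_sub (p := α) hγ (by ring)
      (by rw [hγ_sq, hα, hβ]; ring)]
    ring

/-- The closed-form expressions for `ψ₁` and `ψ₂` in the two-state regime-switching model
solve the pair of renewal integral equations obtained by conditioning on the first jump:
`ψ₁(t) = ∫_0^t η₁ e^{-(η₁+l)u} ψ₂(t-u) du + e^{-(η₁+l)t}` and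
`ψ₂(t) = ∫_0^t η₂ e^{-η₂ u} ψ₁(t-u) du + e^{-η₂ t}` for all `t ≥ 0`. -/
theorem psi_solves_renewal_equations
    (η₁ η₂ l : ℝ) (hη₁ : 0 < η₁) (hη₂ : 0 < η₂) (hl : 0 < l)
    (α β ω : ℝ) (hα : α = (η₁ + η₂ + l) / 2) (hβ : β = (η₁ + η₂ - l) / 2)
    (hω : ω = l * η₂ - α ^ 2)
    (ψ₁ ψ₂ : ℝ → ℝ)
    (hψ₁ : ∀ t, ψ₁ t =
      Real.exp (-α * t) *
        (Real.cosh (Real.sqrt (-ω) * t) + (β / Real.sqrt (-ω)) * Real.sinh (Real.sqrt (-ω) * t)))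
    (hψ₂ : ∀ t, ψ₂ t =
      Real.exp (-α * t) *
        (Real.cosh (Real.sqrt (-ω) * t) + (α / Real.sqrt (-ω)) * Real.sinh (Real.sqrt (-ω) * t))) :
    ∀ t, 0 ≤ t →
      (ψ₁ t = (∫ u in (0 : ℝ)..t, η₁ * Real.exp (-(η₁ + l) * u) * ψ₂ (t - u)) +
          Real.exp (-(η₁ + l) * t)) ∧
      (ψ₂ t = (∫ u in (0 : ℝ)..t, η₂ * Real.exp (-η₂ * u) * ψ₁ (t - u)) +
          Real.exp (-η₂ * t)) :=
  psi_solves_renewal_equations_general η₁ η₂ l hη₁ hl α β ω hα hβ hω ψ₁ ψ₂ hψ₁ hψ₂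
end

section
/- Let n₁, n₂ ≥ 1 be integers, a, ã > 0 and b, c, b̃, c̃ ≥ 0. For integers k, m define ζ_{k,m} = a(n₁−m)(1 + bm + c(k−m)) and ζ̃_{k,m} = ã(n₂−(k−m))(1 + b̃m + c̃(k−m)), and β_{i,j} = ζ_{i,j} + ζ̃_{i,j}. Define functions f_{k,m} on [0,∞) by f_{1,1}(t) = n₁ a e^{−(n₁a+n₂ã)t}, f_{1,0}(t) = n₂ ã e^{−(n₁a+n₂ã)t}, f_{1,m} = 0 for m ∉ {0,1}, and recursively, for 1 ≤ k ≤ n₁+n₂−1: f_{k+1,m+1}(t) = ζ̃_{k,m+1} ∫_0^t f_{k,m+1}(u) e^{−β_{k,m+1}(t−u)} du + ζ_{k,m} ∫_0^t f_{k,m}(u) e^{−β_{k,m}(t−u)} du, and f_{k+1,0}(t) = ζ̃_{k,0} ∫_0^t f_{k,0}(u) e^{−β_{k,0}(t−u)} du. Assume β_{k,m} ≠ β_{i,j} whenever 1 ≤ k ≤ n₁+n₂, max{0, k−n₂} ≤ m ≤ min{k, n₁}, 0 ≤ i ≤ k−1 and 0 ≤ j ≤ m with (i,j) ≠ (k,m).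 Then for all such k and m, f_{k,m}(t) = Σ_{i=0}^{k−1} Σ_{j=0}^{m} α_{k,m,i,j} e^{−β_{i,j} t}, where the coefficients satisfy α_{1,1,0,0} = n₁a, α_{1,0,0,0} = n₂ã, α_{1,1,0,1} = 0, α_{1,m,i,j} = 0 for m ∉ {0,1}, and the recursions: α_{k+1,m+1,i,j} = α_{k,m+1,i,j} ζ̃_{k,m+1}/(β_{k,m+1}−β_{i,j}) + α_{k,m,i,j} ζ_{k,m}/(β_{k,m}−β_{i,j}) for i ≤ k−1, j ≤ m; α_{k+1,m+1,i,m+1} = α_{k,m+1,i,m+1} ζ̃_{k,m+1}/(β_{k,m+1}−β_{i,m+1}) for i ≤ k−1; α_{k+1,m+1,k,m+1} = −Σ_{u=0}^{k−1} Σ_{v=0}^{m+1} α_{k,m+1,u,v} ζ̃_{k,m+1}/(β_{k,m+1}−β_{u,v}); α_{k+1,m+1,k,m} = −Σ_{u=0}^{k−1} Σ_{v=0}^{m} α_{k,m,u,v} ζ_{k,m}/(β_{k,m}−β_{u,v}); α_{k+1,m+1,i,j} = 0 otherwise; together with α_{k+1,0,i,0} = ζ̃_{k,0} α_{k,0,i,0}/(β_{k,0}−β_{i,0})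 for i ≤ k−1 and α_{k+1,0,k,0} = −Σ_{u=0}^{k−1} ζ̃_{k,0} α_{k,0,u,0}/(β_{k,0}−β_{u,0}). -/
open MeasureTheory Real Finset intervalIntegral

/-!
Induction on `k`. Convolving `e^{-β_{ij} u}` with `e^{-q (t-u)}` over `[0, t]` gives
`(e^{-β_{ij} t} - e^{-q t}) / (q - β_{ij})` when `q ≠ β_{ij}`, so the recursion maps exponential
sums to exponential sums, and collecting the coefficient of each `e^{-β_{ij} t}` is exactly the
α-recursion: each new exponent `β_{k,m}` or `β_{k,m+1}` receives minus the sum of the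
coefficients it was convolved against. The recursion for `f_{k+1,k+1}` also involves `f_{k,k+1}`,
outside the admissible range; it vanishes together with its coefficients, by a separate induction
starting from `f_{1,m} = 0` for `m ≥ 2`.
-/

theorem integral_exp_conv_exp {p q : ℝ} (h : p ≠ q) (t : ℝ) :
    ∫ u in (0 : ℝ)..t, exp (-p * u) * exp (-q * (t - u)) =
      (exp (-p * t) - exp (-q * t)) / (q - p) := by
  have hqp : q - p ≠ 0 := sub_ne_zero.mpr h.symm
  have hsplit : ∀ u, exp (-p * u) * exp (-q * (t - u)) = exp (-q * t) * exp ((q - p) * u) :=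
    fun u => by rw [← exp_add, ← exp_add]; ring_nf
  have hcancel : exp (-q * t) * exp ((q - p) * t) = exp (-p * t) := by rw [← exp_add]; ring_nf
  simp_rw [hsplit, intervalIntegral.integral_const_mul,
    integral_comp_mul_left (fun x => exp x) hqp, integral_exp, mul_zero, exp_zero, smul_eq_mul,
    ← hcancel]
  field_simp

theorem integral_sum_exp_conv_exp {ι : Type*} (s : Finset ι) (A r : ι → ℝ) {q : ℝ}
    (hq : ∀ x ∈ s, r x = q → A x = 0) {g : ℝ → ℝ} {t : ℝ} (ht : 0 ≤ t)
    (hg : ∀ u, 0 ≤ u → g u = ∑ x ∈ s, A x * exp (-r x * u)) :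
    ∫ u in (0 : ℝ)..t, g u * exp (-q * (t - u)) =
      ∑ x ∈ s, A x * ((exp (-r x * t) - exp (-q * t)) / (q - r x)) := by
  rw [integral_congr fun u hu => by rw [hg u (Set.uIcc_of_le ht ▸ hu).1]]
  simp_rw [Finset.sum_mul, mul_assoc]
  rw [intervalIntegral.integral_finsetSum fun x _ => by
    apply Continuous.intervalIntegrable; fun_prop]
  refine Finset.sum_congr rfl fun x hx => ?_
  by_cases hrq : r x = q
  · simp [hq x hx hrq]
  · rw [intervalIntegral.integral_const_mul, integral_exp_conv_exp hrq]

theorem integral_sum_sum_exp_conv_exp {ι κ : Type*} (s : Finset ι) (s' : Finset κ)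
    (A r : ι → κ → ℝ) {q : ℝ} (hq : ∀ i ∈ s, ∀ j ∈ s', r i j = q → A i j = 0) {g : ℝ → ℝ}
    {t : ℝ} (ht : 0 ≤ t) (hg : ∀ u, 0 ≤ u → g u = ∑ i ∈ s, ∑ j ∈ s', A i j * exp (-r i j * u)) :
    ∫ u in (0 : ℝ)..t, g u * exp (-q * (t - u)) =
      ∑ i ∈ s, ∑ j ∈ s', A i j * ((exp (-r i j * t) - exp (-q * t)) / (q - r i j)) := by
  rw [← sum_product']
  refine integral_sum_exp_conv_exp (s ×ˢ s') (fun x => A x.1 x.2) (fun x => r x.1 x.2)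
    (fun x hx => hq _ (mem_product.1 hx).1 _ (mem_product.1 hx).2) ht fun u hu => ?_
  rw [hg u hu]
  exact (sum_product' s s' fun i j => A i j * exp (-r i j * u)).symm

theorem integral_mul_eq_zero {g : ℝ → ℝ} {t : ℝ} (ht : 0 ≤ t) (hg : ∀ u, 0 ≤ u → g u = 0)
    (h : ℝ → ℝ) : ∫ u in (0 : ℝ)..t, g u * h u = 0 := by
  rw [integral_congr (g := 0) fun u hu => by simp [hg u (Set.uIcc_of_le ht ▸ hu).1]]
  exact integral_zero

theorem mul_sum_mul_sub_div {ι : Type*} (s : Finset ι) (z e : ℝ) (A E D : ι → ℝ) :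
    z * ∑ x ∈ s, A x * ((E x - e) / D x) =
      ∑ x ∈ s, A x * z / D x * E x - (∑ x ∈ s, A x * z / D x) * e := by
  rw [Finset.mul_sum, Finset.sum_mul, ← Finset.sum_sub_distrib]
  exact Finset.sum_congr rfl fun _ _ => by ring

theorem mul_sum_sum_mul_sub_div {ι κ : Type*} (s : Finset ι) (s' : Finset κ) (z e : ℝ)
    (A E D : ι → κ → ℝ) :
    z * ∑ i ∈ s, ∑ j ∈ s', A i j * ((E i j - e) / D i j) =
      ∑ i ∈ s, ∑ j ∈ s', A i j * z / D i j * E i j -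
        (∑ i ∈ s, ∑ j ∈ s', A i j * z / D i j) * e := by
  simp only [← sum_product']
  exact mul_sum_mul_sub_div _ z e _ _ _

theorem mul_integral_conv_eq_sum_of_rec {K : ℕ} {A B r : ℕ → ℝ} {z : ℝ} {g : ℝ → ℝ} {t : ℝ}
    (h_old : ∀ i, i ≤ K - 1 → B i = z * A i / (r K - r i))
    (h_new : B K = -∑ u ∈ range K, z * A u / (r K - r u)) (ht : 0 ≤ t)
    (hg : ∀ u, 0 ≤ u → g u = ∑ i ∈ range K, A i * exp (-r i * u))
    (hr : ∀ i ∈ range K, r i = r K → A i = 0) :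
    z * ∫ u in (0 : ℝ)..t, g u * exp (-r K * (t - u)) =
      ∑ i ∈ range (K + 1), B i * exp (-r i * t) := by
  have h_comm : ∀ u, z * A u / (r K - r u) = A u * z / (r K - r u) := fun u => by ring
  simp only [h_comm] at h_old h_new
  rw [integral_sum_exp_conv_exp _ A r hr ht hg, mul_sum_mul_sub_div, sum_range_succ, h_new,
    sum_congr rfl fun i hi =>
      congrArg (· * exp (-r i * t)) (h_old i (by have := mem_range.1 hi; omega))]
  ring

/-- The coefficient recursion `α (k+1) (m+1)` from `A₁ = α k (m+1)`, `A₂ = α k m`, with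
`z₁ = ζ̃ k (m+1)`, `z₂ = ζ k m`, `D₁ i j = β k (m+1) - β i j`, `D₂ i j = β k m - β i j`. -/
def IsCoeffStep (K M : ℕ) (A₁ A₂ B : ℕ → ℕ → ℝ) (z₁ z₂ : ℝ) (D₁ D₂ : ℕ → ℕ → ℝ) : Prop :=
  (∀ i j, i ≤ K - 1 → j ≤ M → B i j = A₁ i j * z₁ / D₁ i j + A₂ i j * z₂ / D₂ i j) ∧
  (∀ i, i ≤ K - 1 → B i (M + 1) = A₁ i (M + 1) * z₁ / D₁ i (M + 1)) ∧
  (B K (M + 1) = -∑ u ∈ range K, ∑ v ∈ range (M + 2), A₁ u v * z₁ / D₁ u v) ∧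
  (B K M = -∑ u ∈ range K, ∑ v ∈ range (M + 1), A₂ u v * z₂ / D₂ u v) ∧
  (∀ i j, ¬(i ≤ K - 1 ∧ j ≤ M) → ¬(i ≤ K - 1 ∧ j = M + 1) →
    ¬(i = K ∧ j = M + 1) → ¬(i = K ∧ j = M) → B i j = 0)

namespace IsCoeffStep

variable {K M : ℕ} {A₁ A₂ B D₁ D₂ : ℕ → ℕ → ℝ} {z₁ z₂ : ℝ}

theorem eq_zero (h : IsCoeffStep K M A₁ A₂ B z₁ z₂ D₁ D₂) (h₁ : ∀ i j, A₁ i j = 0)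
    (h₂ : ∀ i j, A₂ i j = 0) (i j : ℕ) : B i j = 0 := by
  obtain ⟨h_inner, h_top, h_new₁, h_new₂, h_rest⟩ := h
  by_cases hij₁ : i ≤ K - 1 ∧ j ≤ M
  · simp [h_inner i j hij₁.1 hij₁.2, h₁, h₂]
  by_cases hij₂ : i ≤ K - 1 ∧ j = M + 1
  · obtain ⟨hi, rfl⟩ := hij₂
    simp [h_top i hi, h₁]
  by_cases hij₃ : i = K ∧ j = M + 1
  · obtain ⟨rfl, rfl⟩ := hij₃
    simp [h_new₁, h₁]
  by_cases hij₄ : i = K ∧ j = M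
  · obtain ⟨rfl, rfl⟩ := hij₄
    simp [h_new₂, h₂]
  exact h_rest i j hij₁ hij₂ hij₃ hij₄

theorem mul_sum_add_mul_sum (h : IsCoeffStep K M A₁ A₂ B z₁ z₂ D₁ D₂) (hK : 1 ≤ K)
    (E : ℕ → ℕ → ℝ) :
    z₁ * ∑ i ∈ range K, ∑ j ∈ range (M + 2), A₁ i j * ((E i j - E K (M + 1)) / D₁ i j) +
      z₂ * ∑ i ∈ range K, ∑ j ∈ range (M + 1), A₂ i j * ((E i j - E K M) / D₂ i j) =
    ∑ i ∈ range (K + 1), ∑ j ∈ range (M + 2), B i j * E i j := by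
  obtain ⟨h_inner, h_top, h_new₁, h_new₂, h_rest⟩ := h
  have h_row : ∀ i ∈ range K, ∑ j ∈ range (M + 2), B i j * E i j =
      ∑ j ∈ range (M + 2), A₁ i j * z₁ / D₁ i j * E i j +
        ∑ j ∈ range (M + 1), A₂ i j * z₂ / D₂ i j * E i j := by
    intro i hi
    have hi : i ≤ K - 1 := by have := mem_range.1 hi; omega
    rw [sum_range_succ _ (M + 1), sum_range_succ (fun j => A₁ i j * z₁ / D₁ i j * E i j),
      h_top i hi, add_right_comm, ← sum_add_distrib]
    congr 1
    exact sum_congr rfl fun j hj => by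
      rw [h_inner i j hi (Nat.lt_succ_iff.1 (mem_range.1 hj))]; ring
  have h_last : ∑ j ∈ range (M + 2), B K j * E K j =
      B K M * E K M + B K (M + 1) * E K (M + 1) := by
    rw [sum_range_succ, sum_range_succ, sum_eq_zero fun j hj => by
      have hj := mem_range.1 hj
      rw [h_rest K j (by omega) (by omega) (by omega) (by omega), zero_mul], zero_add]
  rw [sum_range_succ, sum_congr rfl h_row, sum_add_distrib, h_last, h_new₁, h_new₂,
    mul_sum_sum_mul_sub_div, mul_sum_sum_mul_sub_div]
  ring

theorem mul_integral_conv_add_mul_integral_conv {r : ℕ → ℕ → ℝ}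
    (h : IsCoeffStep K M A₁ A₂ B z₁ z₂ (fun i j => r K (M + 1) - r i j) fun i j => r K M - r i j)
    (hK : 1 ≤ K) {g₁ g₂ : ℝ → ℝ} {t : ℝ} (ht : 0 ≤ t)
    (hg₁ : ∀ u, 0 ≤ u → g₁ u = ∑ i ∈ range K, ∑ j ∈ range (M + 2), A₁ i j * exp (-r i j * u))
    (hg₂ : ∀ u, 0 ≤ u → g₂ u = ∑ i ∈ range K, ∑ j ∈ range (M + 1), A₂ i j * exp (-r i j * u))
    (hr₁ : ∀ i ∈ range K, ∀ j ∈ range (M + 2), r i j = r K (M + 1) → A₁ i j = 0)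
    (hr₂ : ∀ i ∈ range K, ∀ j ∈ range (M + 1), r i j = r K M → A₂ i j = 0) :
    z₁ * (∫ u in (0 : ℝ)..t, g₁ u * exp (-r K (M + 1) * (t - u))) +
      z₂ * (∫ u in (0 : ℝ)..t, g₂ u * exp (-r K M * (t - u))) =
    ∑ i ∈ range (K + 1), ∑ j ∈ range (M + 2), B i j * exp (-r i j * t) := by
  rw [integral_sum_sum_exp_conv_exp _ _ _ _ hr₁ ht hg₁,
    integral_sum_sum_exp_conv_exp _ _ _ _ hr₂ ht hg₂]
  exact h.mul_sum_add_mul_sum hK fun i j => exp (-r i j * t)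

end IsCoeffStep

theorem above_diag_induction {N : ℕ} {P : ℕ → ℕ → Prop} (h_one : ∀ m, 1 < m → P 1 m)
    (h_step : ∀ k, 1 ≤ k → k ≤ N - 1 → ∀ m, P k (m + 1) → P k m → P (k + 1) (m + 1)) :
    ∀ k, 1 ≤ k → k ≤ N → ∀ m, k < m → P k m := by
  intro k hk
  induction k, hk using Nat.le_induction with
  | base => exact fun _ => h_one
  | succ k hk ih =>
    intro hkN m hm
    obtain ⟨m, rfl⟩ : ∃ m', m = m' + 1 := ⟨m - 1, by omega⟩
    exact h_step k hk (by omega) m (ih (by omega) _ (by omega)) (ih (by omega) _ (by omega))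

theorem heterogeneous_joint_density_closed_form_general
    (n₁ n₂ : ℕ)
    (a at' b c bt ct : ℝ)
    (ζ ζt β : ℕ → ℕ → ℝ)
    (hζ : ∀ k m, ζ k m = a * ((n₁ : ℝ) - (m : ℝ)) * (1 + b * (m : ℝ) + c * ((k : ℝ) - (m : ℝ))))
    (hζt : ∀ k m, ζt k m =
      at' * ((n₂ : ℝ) - ((k : ℝ) - (m : ℝ))) * (1 + bt * (m : ℝ) + ct * ((k : ℝ) - (m : ℝ))))
    (hβ : ∀ k m, β k m = ζ k m + ζt k m)
    (f : ℕ → ℕ → ℝ → ℝ)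
    (hf11 : ∀ t, 0 ≤ t → f 1 1 t = (n₁ : ℝ) * a * Real.exp (-((n₁ : ℝ) * a + (n₂ : ℝ) * at') * t))
    (hf10 : ∀ t, 0 ≤ t → f 1 0 t = (n₂ : ℝ) * at' * Real.exp (-((n₁ : ℝ) * a + (n₂ : ℝ) * at') * t))
    (hf1m : ∀ m, m ≠ 0 → m ≠ 1 → ∀ t, 0 ≤ t → f 1 m t = 0)
    (hfrec : ∀ k, 1 ≤ k → k ≤ n₁ + n₂ - 1 → ∀ m, ∀ t, 0 ≤ t →
      f (k + 1) (m + 1) t =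
        ζt k (m + 1) * (∫ u in (0 : ℝ)..t, f k (m + 1) u * Real.exp (-β k (m + 1) * (t - u))) +
          ζ k m * (∫ u in (0 : ℝ)..t, f k m u * Real.exp (-β k m * (t - u))))
    (hfrec0 : ∀ k, 1 ≤ k → k ≤ n₁ + n₂ - 1 → ∀ t, 0 ≤ t →
      f (k + 1) 0 t = ζt k 0 * ∫ u in (0 : ℝ)..t, f k 0 u * Real.exp (-β k 0 * (t - u)))
    (hdistinct : ∀ k m i j : ℕ, 1 ≤ k → k ≤ n₁ + n₂ →
      max 0 (k - n₂) ≤ m → m ≤ min k n₁ → i ≤ k - 1 → j ≤ m → (i, j) ≠ (k, m) →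
      β k m ≠ β i j)
    (α : ℕ → ℕ → ℕ → ℕ → ℝ)
    (hα110 : α 1 1 0 0 = (n₁ : ℝ) * a)
    (hα100 : α 1 0 0 0 = (n₂ : ℝ) * at')
    (hα1101 : α 1 1 0 1 = 0)
    (hα1m : ∀ m, m ≠ 0 → m ≠ 1 → ∀ i j, α 1 m i j = 0)
    (hαrec : ∀ k, 1 ≤ k → k ≤ n₁ + n₂ - 1 → ∀ m,
      (∀ i j, i ≤ k - 1 → j ≤ m →
        α (k + 1) (m + 1) i j =
          α k (m + 1) i j * ζt k (m + 1) / (β k (m + 1) - β i j) +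
            α k m i j * ζ k m / (β k m - β i j)) ∧
      (∀ i, i ≤ k - 1 →
        α (k + 1) (m + 1) i (m + 1) =
          α k (m + 1) i (m + 1) * ζt k (m + 1) / (β k (m + 1) - β i (m + 1))) ∧
      (α (k + 1) (m + 1) k (m + 1) =
        -∑ u ∈ Finset.range k, ∑ v ∈ Finset.range (m + 2),
          α k (m + 1) u v * ζt k (m + 1) / (β k (m + 1) - β u v)) ∧
      (α (k + 1) (m + 1) k m =
        -∑ u ∈ Finset.range k, ∑ v ∈ Finset.range (m + 1),
          α k m u v * ζ k m / (β k m - β u v)) ∧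
      (∀ i j, ¬(i ≤ k - 1 ∧ j ≤ m) → ¬(i ≤ k - 1 ∧ j = m + 1) →
        ¬(i = k ∧ j = m + 1) → ¬(i = k ∧ j = m) → α (k + 1) (m + 1) i j = 0))
    (hαrec0 : ∀ k, 1 ≤ k → k ≤ n₁ + n₂ - 1 →
      (∀ i, i ≤ k - 1 → α (k + 1) 0 i 0 = ζt k 0 * α k 0 i 0 / (β k 0 - β i 0)) ∧
      (α (k + 1) 0 k 0 = -∑ u ∈ Finset.range k, ζt k 0 * α k 0 u 0 / (β k 0 - β u 0))) :
    ∀ k m : ℕ, 1 ≤ k → k ≤ n₁ + n₂ → max 0 (k - n₂) ≤ m → m ≤ min k n₁ →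
      ∀ t, 0 ≤ t →
        f k m t =
          ∑ i ∈ Finset.range k, ∑ j ∈ Finset.range (m + 1),
            α k m i j * Real.exp (-β i j * t) := by
  have hstep : ∀ k, 1 ≤ k → k ≤ n₁ + n₂ - 1 → ∀ m, IsCoeffStep k m (α k (m + 1)) (α k m)
      (α (k + 1) (m + 1)) (ζt k (m + 1)) (ζ k m) (fun i j => β k (m + 1) - β i j)
      (fun i j => β k m - β i j) := hαrec
  have hα_zero : ∀ k, 1 ≤ k → k ≤ n₁ + n₂ → ∀ m, k < m → ∀ i j, α k m i j = 0 :=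
    above_diag_induction (fun m hm => hα1m m (by omega) (by omega))
      fun k hk hkN m h₁ h₂ => (hstep k hk hkN m).eq_zero h₁ h₂
  have hf_zero : ∀ k, 1 ≤ k → k ≤ n₁ + n₂ → ∀ m, k < m → ∀ t, 0 ≤ t → f k m t = 0 :=
    above_diag_induction (fun m hm => hf1m m (by omega) (by omega))
      fun k hk hkN m h₁ h₂ t ht => by
        rw [hfrec k hk hkN m t ht, integral_mul_eq_zero ht h₁, integral_mul_eq_zero ht h₂]; ring
  have hres : ∀ k m, 1 ≤ k → k ≤ n₁ + n₂ → max 0 (k - n₂) ≤ m → m ≤ n₁ →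
      ∀ i ∈ range k, ∀ j ∈ range (m + 1), β i j = β k m → α k m i j = 0 := by
    intro k m hk hkN hm₁ hm₂ i hi j hj hij
    rcases Nat.lt_or_ge k m with hlt | hle
    · exact hα_zero k hk hkN m hlt i j
    · simp only [mem_range] at hi hj
      exact absurd hij.symm
        (hdistinct k m i j hk hkN hm₁ (by omega) (by omega) (by omega) (by grind))
  intro k m hk
  induction k, hk using Nat.le_induction generalizing m with
  | base =>
    intro _ _ hm t ht
    have hβ00 : β 0 0 = n₁ * a + n₂ * at' := by rw [hβ, hζ, hζt]; push_cast; ring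
    obtain rfl | rfl : m = 0 ∨ m = 1 := by omega
    · simp only [zero_add, sum_range_one]
      rw [hf10 t ht, hα100, hβ00]
    · simp only [sum_range_succ, range_zero, sum_empty, zero_add]
      rw [hf11 t ht, hα110, hα1101, hβ00]
      ring
  | succ k hk ih =>
    intro hkN hm₁ hm₂ t ht
    have hkN' : k ≤ n₁ + n₂ - 1 := by omega
    rcases m with _ | m
    · rw [hfrec0 k hk hkN' t ht]
      simp only [zero_add, sum_range_one]
      refine mul_integral_conv_eq_sum_of_rec (hαrec0 k hk hkN').1 (hαrec0 k hk hkN').2 ht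
        (fun u hu => ?_) fun i hi => hres k 0 hk (by omega) (by omega) (by omega) i hi 0 (by simp)
      simpa only [zero_add, sum_range_one] using ih 0 (by omega) (by omega) (by omega) u hu
    · have hf₁ : ∀ u, 0 ≤ u → f k (m + 1) u =
          ∑ i ∈ range k, ∑ j ∈ range (m + 2), α k (m + 1) i j * exp (-β i j * u) := by
        rcases Nat.lt_or_ge k (m + 1) with hlt | hle
        · intro u hu
          simp [hf_zero k hk (by omega) _ hlt u hu, hα_zero k hk (by omega) _ hlt]
        · exact ih _ (by omega) (by omega) (by omega)
      rw [hfrec k hk hkN' m t ht]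
      exact (hstep k hk hkN' m).mul_integral_conv_add_mul_integral_conv hk ht hf₁
        (ih m (by omega) (by omega) (by omega))
        (hres k (m + 1) hk (by omega) (by omega) (by omega))
        (hres k m hk (by omega) (by omega) (by omega))

/-- Closed-form solution of the joint density recursion in the two-group heterogeneous
contagion model: with `ζ k m = a(n₁-m)(1+bm+c(k-m))`,
`ζ̃ k m = ã(n₂-(k-m))(1+b̃m+c̃(k-m))`, `β i j = ζ i j + ζ̃ i j`, and `f k m` defined by the
stated convolution recursion, one has
`f k m t = Σ_{i<k} Σ_{j≤m} α k m i j e^{-β i j t}` for all admissible `(k, m)`,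
where the coefficients `α` satisfy the stated recursions. -/
theorem heterogeneous_joint_density_closed_form
    (n₁ n₂ : ℕ) (hn₁ : 1 ≤ n₁) (hn₂ : 1 ≤ n₂)
    (a at' b c bt ct : ℝ) (ha : 0 < a) (hat : 0 < at')
    (hb : 0 ≤ b) (hc : 0 ≤ c) (hbt : 0 ≤ bt) (hct : 0 ≤ ct)
    (ζ ζt β : ℕ → ℕ → ℝ)
    (hζ : ∀ k m, ζ k m = a * ((n₁ : ℝ) - (m : ℝ)) * (1 + b * (m : ℝ) + c * ((k : ℝ) - (m : ℝ))))
    (hζt : ∀ k m, ζt k m =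
      at' * ((n₂ : ℝ) - ((k : ℝ) - (m : ℝ))) * (1 + bt * (m : ℝ) + ct * ((k : ℝ) - (m : ℝ))))
    (hβ : ∀ k m, β k m = ζ k m + ζt k m)
    (f : ℕ → ℕ → ℝ → ℝ)
    (hf11 : ∀ t, 0 ≤ t → f 1 1 t = (n₁ : ℝ) * a * Real.exp (-((n₁ : ℝ) * a + (n₂ : ℝ) * at') * t))
    (hf10 : ∀ t, 0 ≤ t → f 1 0 t = (n₂ : ℝ) * at' * Real.exp (-((n₁ : ℝ) * a + (n₂ : ℝ) * at') * t))
    (hf1m : ∀ m, m ≠ 0 → m ≠ 1 → ∀ t, 0 ≤ t → f 1 m t = 0)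
    (hfrec : ∀ k, 1 ≤ k → k ≤ n₁ + n₂ - 1 → ∀ m, ∀ t, 0 ≤ t →
      f (k + 1) (m + 1) t =
        ζt k (m + 1) * (∫ u in (0 : ℝ)..t, f k (m + 1) u * Real.exp (-β k (m + 1) * (t - u))) +
          ζ k m * (∫ u in (0 : ℝ)..t, f k m u * Real.exp (-β k m * (t - u))))
    (hfrec0 : ∀ k, 1 ≤ k → k ≤ n₁ + n₂ - 1 → ∀ t, 0 ≤ t →
      f (k + 1) 0 t = ζt k 0 * ∫ u in (0 : ℝ)..t, f k 0 u * Real.exp (-β k 0 * (t - u)))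
    (hdistinct : ∀ k m i j : ℕ, 1 ≤ k → k ≤ n₁ + n₂ →
      max 0 (k - n₂) ≤ m → m ≤ min k n₁ → i ≤ k - 1 → j ≤ m → (i, j) ≠ (k, m) →
      β k m ≠ β i j)
    (α : ℕ → ℕ → ℕ → ℕ → ℝ)
    (hα110 : α 1 1 0 0 = (n₁ : ℝ) * a)
    (hα100 : α 1 0 0 0 = (n₂ : ℝ) * at')
    (hα1101 : α 1 1 0 1 = 0)
    (hα1m : ∀ m, m ≠ 0 → m ≠ 1 → ∀ i j, α 1 m i j = 0)
    (hαrec : ∀ k, 1 ≤ k → k ≤ n₁ + n₂ - 1 → ∀ m,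
      (∀ i j, i ≤ k - 1 → j ≤ m →
        α (k + 1) (m + 1) i j =
          α k (m + 1) i j * ζt k (m + 1) / (β k (m + 1) - β i j) +
            α k m i j * ζ k m / (β k m - β i j)) ∧
      (∀ i, i ≤ k - 1 →
        α (k + 1) (m + 1) i (m + 1) =
          α k (m + 1) i (m + 1) * ζt k (m + 1) / (β k (m + 1) - β i (m + 1))) ∧
      (α (k + 1) (m + 1) k (m + 1) =
        -∑ u ∈ Finset.range k, ∑ v ∈ Finset.range (m + 2),
          α k (m + 1) u v * ζt k (m + 1) / (β k (m + 1) - β u v)) ∧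
      (α (k + 1) (m + 1) k m =
        -∑ u ∈ Finset.range k, ∑ v ∈ Finset.range (m + 1),
          α k m u v * ζ k m / (β k m - β u v)) ∧
      (∀ i j, ¬(i ≤ k - 1 ∧ j ≤ m) → ¬(i ≤ k - 1 ∧ j = m + 1) →
        ¬(i = k ∧ j = m + 1) → ¬(i = k ∧ j = m) → α (k + 1) (m + 1) i j = 0))
    (hαrec0 : ∀ k, 1 ≤ k → k ≤ n₁ + n₂ - 1 →
      (∀ i, i ≤ k - 1 → α (k + 1) 0 i 0 = ζt k 0 * α k 0 i 0 / (β k 0 - β i 0)) ∧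
      (α (k + 1) 0 k 0 = -∑ u ∈ Finset.range k, ζt k 0 * α k 0 u 0 / (β k 0 - β u 0))) :
    ∀ k m : ℕ, 1 ≤ k → k ≤ n₁ + n₂ → max 0 (k - n₂) ≤ m → m ≤ min k n₁ →
      ∀ t, 0 ≤ t →
        f k m t =
          ∑ i ∈ Finset.range k, ∑ j ∈ Finset.range (m + 1),
            α k m i j * Real.exp (-β i j * t) :=
  heterogeneous_joint_density_closed_form_general n₁ n₂ a at' b c bt ct ζ ζt β hζ hζt hβ f hf11 hf10
    hf1m hfrec hfrec0 hdistinct α hα110 hα100 hα1101 hα1m hαrec hαrec0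
end
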